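/- arXiv:math/0612733 — 3 statements merged into one kernel-verified Lean document; each statement's English description precedes it below -/
import Mathlib

section
/- Let ι : S(𝔥*) → H and ι′ : S(𝔥) → H be the canonical algebra maps (well defined since the images of 𝔥* commute, and likewise for 𝔥). For y ∈ 𝔥 and f ∈ S(𝔥*): y ι(f) − ι(f) y = κ ι(∂_y f) − Σ_{s ∈ T} c_s ⟨α_s, y⟩ ι(g_s) t_s in H, where ∂_y is the derivation of S(𝔥*) with ∂_y(x) = ⟨x, y⟩ for x ∈ 𝔥*, and g_s ∈ S(𝔥*) is the unique element with α_s · g_s = f − s·f. Similarly, for x ∈ 𝔥* and g ∈ S(𝔥): ι′(g) x − x ι′(g) = κ ι′(∂_x g) − Σ_{s ∈ T} c_s ⟨x, α_s^∨⟩ t_s ι′(G_s) in H, where ∂_x is the derivation of S(𝔥) with ∂_x(y) = ⟨x, y⟩, and G_s ∈ S(𝔥) is the unique element with α_s^∨ · G_s = g − s⁻¹·g. -/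
/-! Rational Cherednik algebra of a complex reflection group, by generators and relations. -/

/-- A reflection: an invertible linear map whose fixed subspace has codimension one. -/
def IsReflection {𝔥 : Type*} [AddCommGroup 𝔥] [Module ℂ 𝔥] (s : 𝔥 ≃ₗ[ℂ] 𝔥) : Prop :=
  Module.finrank ℂ (LinearMap.ker ((s : 𝔥 →ₗ[ℂ] 𝔥) - (LinearMap.id : 𝔥 →ₗ[ℂ] 𝔥))) + 1 =
    Module.finrank ℂ 𝔥

/-- Generators of the rational Cherednik algebra: `x f` for `f ∈ 𝔥*`, `y v` for `v ∈ 𝔥`,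
and `t w` for `w ∈ W`. -/
inductive RCAGen (D H G : Type*) where
  | x (f : D) : RCAGen D H G
  | y (v : H) : RCAGen D H G
  | t (w : G) : RCAGen D H G

open Classical in
/-- The defining relations of the rational Cherednik algebra attached to the data
`(κ, c, α, α^∨)` for the reflection group `W ⊆ GL(𝔥)`. -/
inductive RCARel {𝔥 : Type*} [AddCommGroup 𝔥] [Module ℂ 𝔥]
    (W : Subgroup (𝔥 ≃ₗ[ℂ] 𝔥)) [Fintype W] (κ : ℂ) (c : W → ℂ)
    (α : W → Module.Dual ℂ 𝔥) (αv : W → 𝔥) :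
    FreeAlgebra ℂ (RCAGen (Module.Dual ℂ 𝔥) 𝔥 W) →
      FreeAlgebra ℂ (RCAGen (Module.Dual ℂ 𝔥) 𝔥 W) → Prop
  | x_add (f g : Module.Dual ℂ 𝔥) : RCARel W κ c α αv
      (FreeAlgebra.ι ℂ (.x (f + g))) (FreeAlgebra.ι ℂ (.x f) + FreeAlgebra.ι ℂ (.x g))
  | x_smul (a : ℂ) (f : Module.Dual ℂ 𝔥) : RCARel W κ c α αv
      (FreeAlgebra.ι ℂ (.x (a • f))) (a • FreeAlgebra.ι ℂ (.x f))
  | y_add (v v' : 𝔥) : RCARel W κ c α αv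
      (FreeAlgebra.ι ℂ (.y (v + v'))) (FreeAlgebra.ι ℂ (.y v) + FreeAlgebra.ι ℂ (.y v'))
  | y_smul (a : ℂ) (v : 𝔥) : RCARel W κ c α αv
      (FreeAlgebra.ι ℂ (.y (a • v))) (a • FreeAlgebra.ι ℂ (.y v))
  | t_mul (w v : W) : RCARel W κ c α αv
      (FreeAlgebra.ι ℂ (.t (w * v))) (FreeAlgebra.ι ℂ (.t w) * FreeAlgebra.ι ℂ (.t v))
  | t_one : RCARel W κ c α αv (FreeAlgebra.ι ℂ (.t 1)) 1
  | t_x (w : W) (f : Module.Dual ℂ 𝔥) : RCARel W κ c α αv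
      (FreeAlgebra.ι ℂ (.t w) * FreeAlgebra.ι ℂ (.x f))
      (FreeAlgebra.ι ℂ (.x (f ∘ₗ ((w : 𝔥 ≃ₗ[ℂ] 𝔥).symm : 𝔥 →ₗ[ℂ] 𝔥))) *
        FreeAlgebra.ι ℂ (.t w))
  | t_y (w : W) (v : 𝔥) : RCARel W κ c α αv
      (FreeAlgebra.ι ℂ (.t w) * FreeAlgebra.ι ℂ (.y v))
      (FreeAlgebra.ι ℂ (.y ((w : 𝔥 ≃ₗ[ℂ] 𝔥) v)) * FreeAlgebra.ι ℂ (.t w))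
  | xx (f g : Module.Dual ℂ 𝔥) : RCARel W κ c α αv
      (FreeAlgebra.ι ℂ (.x f) * FreeAlgebra.ι ℂ (.x g))
      (FreeAlgebra.ι ℂ (.x g) * FreeAlgebra.ι ℂ (.x f))
  | yy (v v' : 𝔥) : RCARel W κ c α αv
      (FreeAlgebra.ι ℂ (.y v) * FreeAlgebra.ι ℂ (.y v'))
      (FreeAlgebra.ι ℂ (.y v') * FreeAlgebra.ι ℂ (.y v))
  | yx (f : Module.Dual ℂ 𝔥) (v : 𝔥) : RCARel W κ c α αv
      (FreeAlgebra.ι ℂ (.y v) * FreeAlgebra.ι ℂ (.x f))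
      (FreeAlgebra.ι ℂ (.x f) * FreeAlgebra.ι ℂ (.y v) + (κ * f v) • 1 -
        ∑ s ∈ Finset.univ.filter (fun s : W => IsReflection (s : 𝔥 ≃ₗ[ℂ] 𝔥)),
          (c s * α s v * f (αv s)) • FreeAlgebra.ι ℂ (.t s))

/-- Relations defining the symmetric algebra of a module `M`: linearity of the embedding
of `M` and commutativity of its elements. -/
inductive SymmRel (R M : Type*) [CommSemiring R] [AddCommMonoid M] [Module R M] :
    FreeAlgebra R M → FreeAlgebra R M → Prop
  | add (a b : M) : SymmRel R M (FreeAlgebra.ι R (a + b)) (FreeAlgebra.ι R a + FreeAlgebra.ι R b)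
  | smul (r : R) (a : M) : SymmRel R M (FreeAlgebra.ι R (r • a)) (r • FreeAlgebra.ι R a)
  | mul_comm (a b : M) : SymmRel R M (FreeAlgebra.ι R a * FreeAlgebra.ι R b)
      (FreeAlgebra.ι R b * FreeAlgebra.ι R a)

/-- The symmetric algebra `S(M)` of a module `M`. -/
abbrev SymmAlg (R M : Type*) [CommSemiring R] [AddCommMonoid M] [Module R M] : Type _ :=
  RingQuot (SymmRel R M)

variable (R M : Type*) [CommSemiring R] [AddCommMonoid M] [Module R M]

/-- The canonical embedding `M → S(M)`. -/
noncomputable def symmMk (a : M) : SymmAlg R M :=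
  RingQuot.mkAlgHom R (SymmRel R M) (FreeAlgebra.ι R a)

theorem symmMk_add (a b : M) : symmMk R M (a + b) = symmMk R M a + symmMk R M b := by
  have h := RingQuot.mkAlgHom_rel R (SymmRel.add (R := R) (M := M) a b)
  simpa [symmMk, map_add] using h

theorem symmMk_smul (r : R) (a : M) : symmMk R M (r • a) = r • symmMk R M a := by
  have h := RingQuot.mkAlgHom_rel R (SymmRel.smul (R := R) (M := M) r a)
  simpa [symmMk, map_smul] using h

theorem symmMk_mul_comm (a b : M) : symmMk R M a * symmMk R M b = symmMk R M b * symmMk R M a := by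
  have h := RingQuot.mkAlgHom_rel R (SymmRel.mul_comm (R := R) (M := M) a b)
  simpa [symmMk, map_mul] using h

/-- The canonical embedding of `M` into its symmetric algebra, as a linear map. -/
noncomputable def symmMkₗ : M →ₗ[R] SymmAlg R M where
  toFun := symmMk R M
  map_add' := symmMk_add R M
  map_smul' := symmMk_smul R M

variable {R M} {A : Type*} [Semiring A] [Algebra R A]

/-- Universal property of the symmetric algebra: a linear map from `M` to an algebra `A`
with pairwise commuting images extends to an algebra map `S(M) → A`. -/
noncomputable def symmLift (φ : M →ₗ[R] A) (hcomm : ∀ a b : M, φ a * φ b = φ b * φ a) :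
    SymmAlg R M →ₐ[R] A :=
  RingQuot.liftAlgHom R ⟨FreeAlgebra.lift R (φ : M → A), by
    rintro x y h
    induction h with
    | add a b => simp
    | smul r a => simp
    | mul_comm a b => simp [hcomm a b]⟩

@[simp]
theorem symmLift_symmMk (φ : M →ₗ[R] A) (hcomm : ∀ a b : M, φ a * φ b = φ b * φ a) (a : M) :
    symmLift φ hcomm (symmMk R M a) = φ a := by
  simp [symmLift, symmMk, RingQuot.liftAlgHom_mkAlgHom_apply]

section
variable {𝔥 : Type*} [AddCommGroup 𝔥] [Module ℂ 𝔥]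
  (W : Subgroup (𝔥 ≃ₗ[ℂ] 𝔥)) [Fintype W] (κ : ℂ) (c : W → ℂ)
  (α : W → Module.Dual ℂ 𝔥) (αv : W → 𝔥)

/-- The image of `x ∈ 𝔥*` in the rational Cherednik algebra. -/
noncomputable def rcaX (f : Module.Dual ℂ 𝔥) : RingQuot (RCARel W κ c α αv) :=
  RingQuot.mkAlgHom ℂ (RCARel W κ c α αv) (FreeAlgebra.ι ℂ (.x f))

/-- The image of `y ∈ 𝔥` in the rational Cherednik algebra. -/
noncomputable def rcaY (v : 𝔥) : RingQuot (RCARel W κ c α αv) :=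
  RingQuot.mkAlgHom ℂ (RCARel W κ c α αv) (FreeAlgebra.ι ℂ (.y v))

/-- The image of `t_w`, `w ∈ W`, in the rational Cherednik algebra. -/
noncomputable def rcaT (w : W) : RingQuot (RCARel W κ c α αv) :=
  RingQuot.mkAlgHom ℂ (RCARel W κ c α αv) (FreeAlgebra.ι ℂ (.t w))

/-- `𝔥* → H`, as a linear map. -/
noncomputable def rcaXₗ : Module.Dual ℂ 𝔥 →ₗ[ℂ] RingQuot (RCARel W κ c α αv) where
  toFun := rcaX W κ c α αv
  map_add' f g := by
    have h := RingQuot.mkAlgHom_rel ℂ (RCARel.x_add (W := W) (κ := κ) (c := c)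
      (α := α) (αv := αv) f g)
    simpa [rcaX, map_add] using h
  map_smul' a f := by
    have h := RingQuot.mkAlgHom_rel ℂ (RCARel.x_smul (W := W) (κ := κ) (c := c)
      (α := α) (αv := αv) a f)
    simpa [rcaX, map_smul] using h

/-- `𝔥 → H`, as a linear map. -/
noncomputable def rcaYₗ : 𝔥 →ₗ[ℂ] RingQuot (RCARel W κ c α αv) where
  toFun := rcaY W κ c α αv
  map_add' v v' := by
    have h := RingQuot.mkAlgHom_rel ℂ (RCARel.y_add (W := W) (κ := κ) (c := c)
      (α := α) (αv := αv) v v')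
    simpa [rcaY, map_add] using h
  map_smul' a v := by
    have h := RingQuot.mkAlgHom_rel ℂ (RCARel.y_smul (W := W) (κ := κ) (c := c)
      (α := α) (αv := αv) a v)
    simpa [rcaY, map_smul] using h

/-- The canonical algebra map `ι : S(𝔥*) → H` (well defined since the images of `𝔥*`
in `H` commute). -/
noncomputable def rcaIotaX : SymmAlg ℂ (Module.Dual ℂ 𝔥) →ₐ[ℂ] RingQuot (RCARel W κ c α αv) :=
  symmLift (rcaXₗ W κ c α αv) (fun f g => by
    have h := RingQuot.mkAlgHom_rel ℂ (RCARel.xx (W := W) (κ := κ) (c := c)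
      (α := α) (αv := αv) f g)
    simpa [rcaXₗ, rcaX, map_mul] using h)

/-- The canonical algebra map `ι' : S(𝔥) → H`. -/
noncomputable def rcaIotaY : SymmAlg ℂ 𝔥 →ₐ[ℂ] RingQuot (RCARel W κ c α αv) :=
  symmLift (rcaYₗ W κ c α αv) (fun v v' => by
    have h := RingQuot.mkAlgHom_rel ℂ (RCARel.yy (W := W) (κ := κ) (c := c)
      (α := α) (αv := αv) v v')
    simpa [rcaYₗ, rcaY, map_mul] using h)

variable (𝔥) in
/-- The action of `w` on `𝔥*`, `(w f)(v) = f (w⁻¹ v)`, as a linear map. -/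
noncomputable def dualAct (w : 𝔥 ≃ₗ[ℂ] 𝔥) :
    Module.Dual ℂ 𝔥 →ₗ[ℂ] Module.Dual ℂ 𝔥 where
  toFun f := f ∘ₗ (w.symm : 𝔥 →ₗ[ℂ] 𝔥)
  map_add' f g := by ext v; simp
  map_smul' a f := by ext v; simp

variable (𝔥) in
/-- The action of `w` on `S(𝔥*)` by algebra automorphisms. -/
noncomputable def symmActD (w : 𝔥 ≃ₗ[ℂ] 𝔥) :
    SymmAlg ℂ (Module.Dual ℂ 𝔥) →ₐ[ℂ] SymmAlg ℂ (Module.Dual ℂ 𝔥) :=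
  symmLift (symmMkₗ ℂ (Module.Dual ℂ 𝔥) ∘ₗ dualAct 𝔥 w)
    (fun f g => by simp [symmMkₗ, symmMk_mul_comm])

variable (𝔥) in
/-- The action of `w` on `S(𝔥)` by algebra automorphisms. -/
noncomputable def symmActH (w : 𝔥 ≃ₗ[ℂ] 𝔥) : SymmAlg ℂ 𝔥 →ₐ[ℂ] SymmAlg ℂ 𝔥 :=
  symmLift (symmMkₗ ℂ 𝔥 ∘ₗ (w : 𝔥 →ₗ[ℂ] 𝔥))
    (fun v v' => by simp [symmMkₗ, symmMk_mul_comm])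

/-!
Fix `y` and view both sides of the first identity as functions of `f ∈ S(𝔥*)`. The left side
`[y, ι f]` satisfies the Leibniz rule, and so does the right side, once divided differences are
combined by `Δ_s(f g) = Δ_s(f) · s(g) + f · Δ_s(g)` and `t_s` is moved past `ι g` by
`t_s ι(g) = ι(s g) t_s`. Hence the identity spreads from the generators `x ∈ 𝔥*`, where it is a
defining relation of `H`, to all of `S(𝔥*)`. The `g_s` are unique since `α_s ≠ 0` and `S(𝔥*)`
embeds into a polynomial ring. The second identity is the first one in the opposite algebra
`Hᵐᵒᵖ`, where `t_s` twists `ι'` by `s⁻¹`.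
-/

section SymmetricAlgebra

variable {k V : Type*}

@[elab_as_elim]
theorem SymmAlg.induction [CommSemiring k] [AddCommMonoid V] [Module k V]
    {P : SymmAlg k V → Prop} (algebraMap : ∀ r : k, P (algebraMap k _ r))
    (mk : ∀ m : V, P (symmMk k V m)) (add : ∀ p q, P p → P q → P (p + q))
    (mul : ∀ p q, P p → P q → P (p * q)) (p : SymmAlg k V) : P p := by
  obtain ⟨p, rfl⟩ := RingQuot.mkAlgHom_surjective k (SymmRel k V) p
  induction p using FreeAlgebra.induction with
  | grade0 r => simpa using algebraMap r
  | grade1 m => exact mk m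
  | add p q hp hq => simpa using add _ _ hp hq
  | mul p q hp hq => simpa using mul _ _ hp hq

theorem SymmAlg.algHom_ext [CommSemiring k] [AddCommMonoid V] [Module k V] {E : Type*}
    [Semiring E] [Algebra k E] {φ ψ : SymmAlg k V →ₐ[k] E}
    (h : ∀ m, φ (symmMk k V m) = ψ (symmMk k V m)) : φ = ψ :=
  RingQuot.ringQuot_ext' k φ ψ (FreeAlgebra.hom_ext (funext h))

theorem symmAlg_mul_comm [CommSemiring k] [AddCommMonoid V] [Module k V]
    (p q : SymmAlg k V) : p * q = q * p := by
  induction p using SymmAlg.induction with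
  | algebraMap r => exact Algebra.commutes r q
  | add p₁ p₂ h₁ h₂ => rw [add_mul, mul_add, h₁, h₂]
  | mul p₁ p₂ h₁ h₂ => rw [mul_assoc, h₂, ← mul_assoc, h₁, mul_assoc]
  | mk m =>
    induction q using SymmAlg.induction with
    | algebraMap r => exact (Algebra.commutes r _).symm
    | mk m' => exact symmMk_mul_comm k V m m'
    | add q₁ q₂ h₁ h₂ => rw [add_mul, mul_add, h₁, h₂]
    | mul q₁ q₂ h₁ h₂ => rw [← mul_assoc, h₁, mul_assoc, h₂, ← mul_assoc]

noncomputable instance [CommRing k] [AddCommMonoid V] [Module k V] : CommRing (SymmAlg k V) :=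
  { (inferInstance : Ring (SymmAlg k V)) with mul_comm := symmAlg_mul_comm }

theorem symmMk_sub [CommRing k] [AddCommGroup V] [Module k V] (m m' : V) :
    symmMk k V (m - m') = symmMk k V m - symmMk k V m' :=
  map_sub (symmMkₗ k V) m m'

theorem mul_eq_mul_of_forall_symmMk [CommSemiring k] [AddCommMonoid V] [Module k V] {E : Type*}
    [Semiring E] [Algebra k E] {φ ψ : SymmAlg k V →ₐ[k] E} {u : E}
    (h : ∀ m, u * φ (symmMk k V m) = ψ (symmMk k V m) * u) (p : SymmAlg k V) :
    u * φ p = ψ p * u := by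
  induction p using SymmAlg.induction with
  | algebraMap r => simp only [AlgHom.commutes, Algebra.commutes]
  | mk m => exact h m
  | add p q hp hq => rw [map_add, map_add, mul_add, add_mul, hp, hq]
  | mul p q hp hq => rw [map_mul, map_mul, ← mul_assoc, hp, mul_assoc, hq, mul_assoc]

end SymmetricAlgebra

section Polynomial

variable {K V : Type*} [Field K] [AddCommGroup V] [Module K V]

noncomputable def SymmAlg.toMvPolynomial :
    SymmAlg K V →ₐ[K] MvPolynomial (Module.Basis.ofVectorSpaceIndex K V) K :=
  symmLift (Finsupp.linearCombination K MvPolynomial.X ∘ₗ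
      (Module.Basis.ofVectorSpace K V).repr.toLinearMap) fun _ _ => mul_comm _ _

noncomputable def SymmAlg.ofMvPolynomial :
    MvPolynomial (Module.Basis.ofVectorSpaceIndex K V) K →ₐ[K] SymmAlg K V :=
  MvPolynomial.aeval fun i => symmMk K V (Module.Basis.ofVectorSpace K V i)

theorem SymmAlg.ofMvPolynomial_comp_toMvPolynomial :
    SymmAlg.ofMvPolynomial.comp SymmAlg.toMvPolynomial = AlgHom.id K (SymmAlg K V) := by
  refine SymmAlg.algHom_ext fun m => ?_
  set b := Module.Basis.ofVectorSpace K V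
  calc SymmAlg.ofMvPolynomial (SymmAlg.toMvPolynomial (symmMk K V m))
      = symmMkₗ K V (Finsupp.linearCombination K b (b.repr m)) := by
        simp [SymmAlg.toMvPolynomial, SymmAlg.ofMvPolynomial, Finsupp.linearCombination_apply,
          map_finsuppSum, symmMkₗ, b]
    _ = symmMk K V m := by rw [b.linearCombination_repr]; rfl

theorem SymmAlg.toMvPolynomial_injective :
    Function.Injective (SymmAlg.toMvPolynomial : SymmAlg K V → _) :=
  Function.LeftInverse.injective (g := SymmAlg.ofMvPolynomial)
    (AlgHom.congr_fun SymmAlg.ofMvPolynomial_comp_toMvPolynomial)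

instance : NoZeroDivisors (SymmAlg K V) :=
  SymmAlg.toMvPolynomial_injective.noZeroDivisors _ (map_zero _) (map_mul _)

theorem symmMk_ne_zero {m : V} (hm : m ≠ 0) : symmMk K V m ≠ 0 := by
  obtain ⟨f, hf⟩ : ∃ f : Module.Dual K V, f m ≠ 0 := by
    by_contra! h
    exact hm ((Module.forall_dual_apply_eq_zero_iff K m).mp h)
  intro h
  exact hf (by simpa using congrArg (symmLift f fun _ _ => mul_comm _ _) h)

end Polynomial

section DividedDifference

variable {k S : Type*} [CommRing k] [CommRing S] [Algebra k S] {σ : S →ₐ[k] S} {a : S}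

def IsDivDiff (σ : S →ₐ[k] S) (a f g : S) : Prop :=
  a * g = f - σ f

theorem isDivDiff_algebraMap (σ : S →ₐ[k] S) (a : S) (r : k) :
    IsDivDiff σ a (algebraMap k S r) 0 := by
  simp [IsDivDiff]

theorem IsDivDiff.add {f₁ f₂ g₁ g₂ : S} (h₁ : IsDivDiff σ a f₁ g₁) (h₂ : IsDivDiff σ a f₂ g₂) :
    IsDivDiff σ a (f₁ + f₂) (g₁ + g₂) := by
  rw [IsDivDiff, mul_add, h₁, h₂, map_add]
  ring

theorem IsDivDiff.mul {f₁ f₂ g₁ g₂ : S} (h₁ : IsDivDiff σ a f₁ g₁) (h₂ : IsDivDiff σ a f₂ g₂) :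
    IsDivDiff σ a (f₁ * f₂) (g₁ * σ f₂ + f₁ * g₂) := by
  rw [IsDivDiff, mul_add, ← mul_assoc, h₁, mul_left_comm, h₂, map_mul]
  ring

theorem IsDivDiff.unique [NoZeroDivisors S] (ha : a ≠ 0) {f g g' : S} (h : IsDivDiff σ a f g)
    (h' : IsDivDiff σ a f g') : g = g' :=
  mul_left_cancel₀ ha (h.trans h'.symm)

theorem isDivDiff_symmMk {V : Type*} [AddCommGroup V] [Module k V]
    {σ : SymmAlg k V →ₐ[k] SymmAlg k V} {m n : V} {r : k}
    (h : σ (symmMk k V m) = symmMk k V (m - r • n)) :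
    IsDivDiff σ (symmMk k V n) (symmMk k V m) (algebraMap k _ r) := by
  rw [IsDivDiff, h, symmMk_sub, symmMk_smul, sub_sub_cancel, Algebra.smul_def, mul_comm]

end DividedDifference

def Derivation.ofLeibniz {k S : Type*} [CommRing k] [CommRing S] [Algebra k S] (D : S →ₗ[k] S)
    (hD : ∀ p q, D (p * q) = D p * q + p * D q) : Derivation k S S :=
  Derivation.mk' D fun p q => by rw [hD, smul_eq_mul, smul_eq_mul, add_comm, mul_comm (D p)]

section TwistedCommutator

variable {k V E ι : Type*} [CommRing k] [AddCommMonoid V] [Module k V] [Ring E] [Algebra k E]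
  {φ : SymmAlg k V →ₐ[k] E} {z : E} {κ : k} {D : Derivation k (SymmAlg k V) (SymmAlg k V)}
  {T : Finset ι} {a : ι → SymmAlg k V} {σ : ι → SymmAlg k V →ₐ[k] SymmAlg k V} {t : ι → E}
  {b : ι → k}

theorem commutator_mul_of_commutator (htw : ∀ s ∈ T, ∀ f, t s * φ f = φ (σ s f) * t s)
    {f₁ f₂ : SymmAlg k V} {g₁ g₂ : ι → SymmAlg k V}
    (h₁ : z * φ f₁ - φ f₁ * z = κ • φ (D f₁) - ∑ s ∈ T, b s • (φ (g₁ s) * t s))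
    (h₂ : z * φ f₂ - φ f₂ * z = κ • φ (D f₂) - ∑ s ∈ T, b s • (φ (g₂ s) * t s)) :
    z * φ (f₁ * f₂) - φ (f₁ * f₂) * z = κ • φ (D (f₁ * f₂)) -
      ∑ s ∈ T, b s • (φ (g₁ s * σ s f₂ + f₁ * g₂ s) * t s) := by
  have hD : φ (D (f₁ * f₂)) = φ (D f₁) * φ f₂ + φ f₁ * φ (D f₂) := by
    rw [Derivation.leibniz, smul_eq_mul, smul_eq_mul, mul_comm f₂, add_comm, map_add, map_mul,
      map_mul]
  have hsum : ∑ s ∈ T, b s • (φ (g₁ s * σ s f₂ + f₁ * g₂ s) * t s) =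
      (∑ s ∈ T, b s • (φ (g₁ s) * t s)) * φ f₂ + φ f₁ * ∑ s ∈ T, b s • (φ (g₂ s) * t s) := by
    rw [Finset.sum_mul, Finset.mul_sum, ← Finset.sum_add_distrib]
    refine Finset.sum_congr rfl fun s hs => ?_
    rw [map_add, map_mul, map_mul, add_mul, mul_assoc, ← htw s hs, smul_add, smul_mul_assoc,
      mul_smul_comm, mul_assoc, mul_assoc]
  have hcomm : z * (φ f₁ * φ f₂) - φ f₁ * φ f₂ * z =
      (z * φ f₁ - φ f₁ * z) * φ f₂ + φ f₁ * (z * φ f₂ - φ f₂ * z) := by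
    noncomm_ring
  rw [map_mul, hcomm, h₁, h₂, hD, hsum]
  simp only [sub_mul, mul_sub, smul_mul_assoc, mul_smul_comm, smul_add]
  abel

theorem exists_isDivDiff_and_commutator (htw : ∀ s ∈ T, ∀ f, t s * φ f = φ (σ s f) * t s)
    (hgen : ∀ m : V, ∃ g : ι → SymmAlg k V,
      (∀ s ∈ T, IsDivDiff (σ s) (a s) (symmMk k V m) (g s)) ∧
      z * φ (symmMk k V m) - φ (symmMk k V m) * z =
        κ • φ (D (symmMk k V m)) - ∑ s ∈ T, b s • (φ (g s) * t s))
    (f : SymmAlg k V) : ∃ g : ι → SymmAlg k V, (∀ s ∈ T, IsDivDiff (σ s) (a s) f (g s)) ∧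
      z * φ f - φ f * z = κ • φ (D f) - ∑ s ∈ T, b s • (φ (g s) * t s) := by
  induction f using SymmAlg.induction with
  | algebraMap r =>
    refine ⟨0, fun s _ => isDivDiff_algebraMap _ _ r, ?_⟩
    simp [Algebra.commutes]
  | mk m => exact hgen m
  | add f₁ f₂ ih₁ ih₂ =>
    obtain ⟨g₁, hg₁, h₁⟩ := ih₁
    obtain ⟨g₂, hg₂, h₂⟩ := ih₂
    refine ⟨g₁ + g₂, fun s hs => (hg₁ s hs).add (hg₂ s hs), ?_⟩
    have hcomm : z * (φ f₁ + φ f₂) - (φ f₁ + φ f₂) * z =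
        (z * φ f₁ - φ f₁ * z) + (z * φ f₂ - φ f₂ * z) := by
      noncomm_ring
    rw [map_add, hcomm, h₁, h₂]
    simp only [map_add, Pi.add_apply, add_mul, smul_add, Finset.sum_add_distrib]
    abel
  | mul f₁ f₂ ih₁ ih₂ =>
    obtain ⟨g₁, hg₁, h₁⟩ := ih₁
    obtain ⟨g₂, hg₂, h₂⟩ := ih₂
    exact ⟨fun s => g₁ s * σ s f₂ + f₁ * g₂ s, fun s hs => (hg₁ s hs).mul (hg₂ s hs),
      commutator_mul_of_commutator htw h₁ h₂⟩

theorem commutator_eq_of_isDivDiff [NoZeroDivisors (SymmAlg k V)]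
    (htw : ∀ s ∈ T, ∀ f, t s * φ f = φ (σ s f) * t s)
    (hgen : ∀ m : V, ∃ g : ι → SymmAlg k V,
      (∀ s ∈ T, IsDivDiff (σ s) (a s) (symmMk k V m) (g s)) ∧
      z * φ (symmMk k V m) - φ (symmMk k V m) * z =
        κ • φ (D (symmMk k V m)) - ∑ s ∈ T, b s • (φ (g s) * t s))
    (ha : ∀ s ∈ T, a s ≠ 0) {f : SymmAlg k V} {g : ι → SymmAlg k V}
    (hg : ∀ s ∈ T, IsDivDiff (σ s) (a s) f (g s)) :
    z * φ f - φ f * z = κ • φ (D f) - ∑ s ∈ T, b s • (φ (g s) * t s) := by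
  obtain ⟨g₀, hg₀, h⟩ := exists_isDivDiff_and_commutator htw hgen f
  rwa [Finset.sum_congr rfl fun s hs => by rw [(hg s hs).unique (ha s hs) (hg₀ s hs)]]

end TwistedCommutator

theorem not_isReflection_one {𝔥 : Type*} [AddCommGroup 𝔥] [Module ℂ 𝔥] :
    ¬ IsReflection (1 : 𝔥 ≃ₗ[ℂ] 𝔥) := by
  rw [IsReflection, LinearEquiv.coe_toLinearMap_one, sub_self, LinearMap.ker_zero, finrank_top]
  omega

theorem IsReflection.ne_zero_of_symm_apply {𝔥 : Type*} [AddCommGroup 𝔥] [Module ℂ 𝔥]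
    {s : 𝔥 ≃ₗ[ℂ] 𝔥} (hs : IsReflection s) {f : Module.Dual ℂ 𝔥} {u : 𝔥}
    (h : ∀ v, s.symm v = v - f v • u) : f ≠ 0 ∧ u ≠ 0 := by
  have hs_one : f = 0 ∨ u = 0 → s = 1 := fun h₀ => by
    ext v
    have := h (s v)
    rcases h₀ with rfl | rfl <;> simpa using this.symm
  exact ⟨fun hf => not_isReflection_one (hs_one (.inl hf) ▸ hs),
    fun hu => not_isReflection_one (hs_one (.inr hu) ▸ hs)⟩

theorem rcaT_one : rcaT W κ c α αv 1 = 1 := by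
  simpa [rcaT] using RingQuot.mkAlgHom_rel ℂ (RCARel.t_one (W := W) (κ := κ) (c := c) (α := α)
    (αv := αv))

theorem rcaT_mul (w w' : W) :
    rcaT W κ c α αv (w * w') = rcaT W κ c α αv w * rcaT W κ c α αv w' := by
  simpa [rcaT] using RingQuot.mkAlgHom_rel ℂ (RCARel.t_mul (κ := κ) (c := c) (α := α)
    (αv := αv) w w')

theorem rcaT_mul_rcaX (w : W) (f : Module.Dual ℂ 𝔥) :
    rcaT W κ c α αv w * rcaX W κ c α αv f =
      rcaX W κ c α αv (f ∘ₗ ((w : 𝔥 ≃ₗ[ℂ] 𝔥).symm : 𝔥 →ₗ[ℂ] 𝔥)) * rcaT W κ c α αv w := by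
  simpa [rcaT, rcaX] using RingQuot.mkAlgHom_rel ℂ (RCARel.t_x (κ := κ) (c := c) (α := α)
    (αv := αv) w f)

theorem rcaT_mul_rcaY (w : W) (v : 𝔥) :
    rcaT W κ c α αv w * rcaY W κ c α αv v =
      rcaY W κ c α αv ((w : 𝔥 ≃ₗ[ℂ] 𝔥) v) * rcaT W κ c α αv w := by
  simpa [rcaT, rcaY] using RingQuot.mkAlgHom_rel ℂ (RCARel.t_y (κ := κ) (c := c) (α := α)
    (αv := αv) w v)

open Classical in
theorem rcaY_mul_rcaX_sub (v : 𝔥) (f : Module.Dual ℂ 𝔥) :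
    rcaY W κ c α αv v * rcaX W κ c α αv f - rcaX W κ c α αv f * rcaY W κ c α αv v =
      (κ * f v) • 1 - ∑ s ∈ Finset.univ.filter (fun s : W => IsReflection (s : 𝔥 ≃ₗ[ℂ] 𝔥)),
        (c s * α s v * f (αv s)) • rcaT W κ c α αv s := by
  have h := RingQuot.mkAlgHom_rel ℂ (RCARel.yx (W := W) (κ := κ) (c := c) (α := α) (αv := αv) f v)
  simp only [map_mul, map_sub, map_add, map_smul, map_one, map_sum] at h
  rw [rcaY, rcaX, h, add_sub_assoc, add_sub_cancel_left]
  rfl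

theorem rcaIotaX_symmMk (f : Module.Dual ℂ 𝔥) :
    rcaIotaX W κ c α αv (symmMk ℂ _ f) = rcaX W κ c α αv f := by
  simp [rcaIotaX, rcaXₗ]

theorem rcaIotaY_symmMk (v : 𝔥) : rcaIotaY W κ c α αv (symmMk ℂ _ v) = rcaY W κ c α αv v := by
  simp [rcaIotaY, rcaYₗ]

theorem symmActD_symmMk (w : 𝔥 ≃ₗ[ℂ] 𝔥) (f : Module.Dual ℂ 𝔥) :
    symmActD 𝔥 w (symmMk ℂ _ f) = symmMk ℂ _ (f ∘ₗ (w.symm : 𝔥 →ₗ[ℂ] 𝔥)) := by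
  simp [symmActD, symmMkₗ, dualAct]

theorem symmActH_symmMk (w : 𝔥 ≃ₗ[ℂ] 𝔥) (v : 𝔥) :
    symmActH 𝔥 w (symmMk ℂ _ v) = symmMk ℂ _ (w v) := by
  simp [symmActH, symmMkₗ]

theorem rcaT_mul_rcaIotaX (w : W) (f : SymmAlg ℂ (Module.Dual ℂ 𝔥)) :
    rcaT W κ c α αv w * rcaIotaX W κ c α αv f =
      rcaIotaX W κ c α αv (symmActD 𝔥 w f) * rcaT W κ c α αv w :=
  mul_eq_mul_of_forall_symmMk (ψ := (rcaIotaX W κ c α αv).comp (symmActD 𝔥 w)) (fun f => by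
    simpa [rcaIotaX_symmMk, symmActD_symmMk] using rcaT_mul_rcaX W κ c α αv w f) f

theorem rcaT_mul_rcaIotaY (w : W) (g : SymmAlg ℂ 𝔥) :
    rcaT W κ c α αv w * rcaIotaY W κ c α αv g =
      rcaIotaY W κ c α αv (symmActH 𝔥 w g) * rcaT W κ c α αv w :=
  mul_eq_mul_of_forall_symmMk (ψ := (rcaIotaY W κ c α αv).comp (symmActH 𝔥 w)) (fun v => by
    simpa [rcaIotaY_symmMk, symmActH_symmMk] using rcaT_mul_rcaY W κ c α αv w v) g

theorem rcaIotaY_mul_rcaT (w : W) (g : SymmAlg ℂ 𝔥) :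
    rcaIotaY W κ c α αv g * rcaT W κ c α αv w =
      rcaT W κ c α αv w * rcaIotaY W κ c α αv (symmActH 𝔥 ((w⁻¹ : W) : 𝔥 ≃ₗ[ℂ] 𝔥) g) := by
  calc rcaIotaY W κ c α αv g * rcaT W κ c α αv w
      = rcaT W κ c α αv w * (rcaT W κ c α αv w⁻¹ * rcaIotaY W κ c α αv g) *
          rcaT W κ c α αv w := by
        rw [← mul_assoc, ← rcaT_mul, mul_inv_cancel, rcaT_one, one_mul]
    _ = rcaT W κ c α αv w * rcaIotaY W κ c α αv (symmActH 𝔥 ((w⁻¹ : W) : 𝔥 ≃ₗ[ℂ] 𝔥) g) *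
          (rcaT W κ c α αv w⁻¹ * rcaT W κ c α αv w) := by
        rw [rcaT_mul_rcaIotaY]
        simp only [mul_assoc]
    _ = _ := by rw [← rcaT_mul, inv_mul_cancel, rcaT_one, mul_one]

open Classical in
theorem rcaY_mul_rcaIotaX_sub
    (hα : ∀ s : W, IsReflection (s : 𝔥 ≃ₗ[ℂ] 𝔥) →
      ∀ v : 𝔥, (s : 𝔥 ≃ₗ[ℂ] 𝔥).symm v = v - α s v • αv s)
    (v : 𝔥)
    (D : Derivation ℂ (SymmAlg ℂ (Module.Dual ℂ 𝔥)) (SymmAlg ℂ (Module.Dual ℂ 𝔥)))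
    (hD : ∀ f : Module.Dual ℂ 𝔥, D (symmMk ℂ _ f) = algebraMap ℂ _ (f v))
    {f : SymmAlg ℂ (Module.Dual ℂ 𝔥)} {gs : W → SymmAlg ℂ (Module.Dual ℂ 𝔥)}
    (hgs : ∀ s : W, IsReflection (s : 𝔥 ≃ₗ[ℂ] 𝔥) →
      IsDivDiff (symmActD 𝔥 s) (symmMk ℂ _ (α s)) f (gs s)) :
    rcaY W κ c α αv v * rcaIotaX W κ c α αv f - rcaIotaX W κ c α αv f * rcaY W κ c α αv v =
      κ • rcaIotaX W κ c α αv (D f) -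
        ∑ s ∈ Finset.univ.filter (fun s : W => IsReflection (s : 𝔥 ≃ₗ[ℂ] 𝔥)),
          (c s * α s v) • (rcaIotaX W κ c α αv (gs s) * rcaT W κ c α αv s) := by
  refine commutator_eq_of_isDivDiff (fun s _ f => rcaT_mul_rcaIotaX W κ c α αv s f)
    (fun f => ⟨fun s => algebraMap ℂ _ (f (αv s)), fun s hs => ?_, ?_⟩)
    (fun s hs => symmMk_ne_zero
      ((Finset.mem_filter.1 hs).2.ne_zero_of_symm_apply (hα s (Finset.mem_filter.1 hs).2)).1)
    (fun s hs => hgs s (Finset.mem_filter.1 hs).2)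
  · refine isDivDiff_symmMk ?_
    rw [symmActD_symmMk]
    congr 1
    ext u
    simp [hα s (Finset.mem_filter.1 hs).2 u, mul_comm]
  · rw [rcaIotaX_symmMk, rcaY_mul_rcaX_sub, hD]
    simp [Algebra.smul_def, mul_assoc]

open Classical MulOpposite in
theorem rcaIotaY_mul_rcaX_sub
    (hα : ∀ s : W, IsReflection (s : 𝔥 ≃ₗ[ℂ] 𝔥) →
      ∀ v : 𝔥, (s : 𝔥 ≃ₗ[ℂ] 𝔥).symm v = v - α s v • αv s)
    (x : Module.Dual ℂ 𝔥) (D : Derivation ℂ (SymmAlg ℂ 𝔥) (SymmAlg ℂ 𝔥))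
    (hD : ∀ v : 𝔥, D (symmMk ℂ 𝔥 v) = algebraMap ℂ _ (x v))
    {g : SymmAlg ℂ 𝔥} {Gs : W → SymmAlg ℂ 𝔥}
    (hGs : ∀ s : W, IsReflection (s : 𝔥 ≃ₗ[ℂ] 𝔥) →
      IsDivDiff (symmActH 𝔥 ((s⁻¹ : W) : 𝔥 ≃ₗ[ℂ] 𝔥)) (symmMk ℂ 𝔥 (αv s)) g (Gs s)) :
    rcaIotaY W κ c α αv g * rcaX W κ c α αv x - rcaX W κ c α αv x * rcaIotaY W κ c α αv g =
      κ • rcaIotaY W κ c α αv (D g) -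
        ∑ s ∈ Finset.univ.filter (fun s : W => IsReflection (s : 𝔥 ≃ₗ[ℂ] 𝔥)),
          (c s * x (αv s)) • (rcaT W κ c α αv s * rcaIotaY W κ c α αv (Gs s)) := by
  let φ := (rcaIotaY W κ c α αv).toOpposite fun p q => by
    rw [Commute, SemiconjBy, ← map_mul, ← map_mul, mul_comm]
  -- the first commutation formula, in `Hᵐᵒᵖ` with `φ = op ∘ ι'` in place of `ι`
  suffices h : op (rcaX W κ c α αv x) * φ g - φ g * op (rcaX W κ c α αv x) =
      κ • φ (D g) - ∑ s ∈ Finset.univ.filter (fun s : W => IsReflection (s : 𝔥 ≃ₗ[ℂ] 𝔥)),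
        (c s * x (αv s)) • (φ (Gs s) * op (rcaT W κ c α αv s)) by
    apply op_injective
    simpa [φ, ← op_mul] using h
  refine commutator_eq_of_isDivDiff (fun s _ g => by simp [φ, ← op_mul, rcaIotaY_mul_rcaT])
    (fun v => ⟨fun s => algebraMap ℂ _ (α s v), fun s hs => ?_, ?_⟩)
    (fun s hs => symmMk_ne_zero
      ((Finset.mem_filter.1 hs).2.ne_zero_of_symm_apply (hα s (Finset.mem_filter.1 hs).2)).2)
    (fun s hs => hGs s (Finset.mem_filter.1 hs).2)
  · refine isDivDiff_symmMk ?_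
    rw [symmActH_symmMk]
    exact congrArg _ (hα s (Finset.mem_filter.1 hs).2 v)
  · simp only [φ, AlgHom.toOpposite_apply, Function.comp_apply, ← op_mul, ← op_sub,
      rcaIotaY_symmMk, rcaY_mul_rcaX_sub, hD]
    simp [Algebra.algebraMap_eq_smul_one, smul_smul, mul_right_comm]

open Classical in
theorem stmt2
    (hα : ∀ s : W, IsReflection (s : 𝔥 ≃ₗ[ℂ] 𝔥) →
      ∀ v : 𝔥, (s : 𝔥 ≃ₗ[ℂ] 𝔥).symm v = v - α s v • αv s) :
    (∀ (v : 𝔥) (f : SymmAlg ℂ (Module.Dual ℂ 𝔥))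
      (D : SymmAlg ℂ (Module.Dual ℂ 𝔥) →ₗ[ℂ] SymmAlg ℂ (Module.Dual ℂ 𝔥)),
      (∀ a b, D (a * b) = D a * b + a * D b) →
      (∀ x : Module.Dual ℂ 𝔥, D (symmMk ℂ (Module.Dual ℂ 𝔥) x) = algebraMap ℂ _ (x v)) →
      ∀ gs : W → SymmAlg ℂ (Module.Dual ℂ 𝔥),
      (∀ s : W, IsReflection (s : 𝔥 ≃ₗ[ℂ] 𝔥) →
        symmMk ℂ (Module.Dual ℂ 𝔥) (α s) * gs s = f - symmActD 𝔥 (s : 𝔥 ≃ₗ[ℂ] 𝔥) f) →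
      rcaY W κ c α αv v * rcaIotaX W κ c α αv f -
          rcaIotaX W κ c α αv f * rcaY W κ c α αv v =
        κ • rcaIotaX W κ c α αv (D f) -
          ∑ s ∈ Finset.univ.filter (fun s : W => IsReflection (s : 𝔥 ≃ₗ[ℂ] 𝔥)),
            (c s * α s v) • (rcaIotaX W κ c α αv (gs s) * rcaT W κ c α αv s))
    ∧
    (∀ (x : Module.Dual ℂ 𝔥) (g : SymmAlg ℂ 𝔥)
      (D' : SymmAlg ℂ 𝔥 →ₗ[ℂ] SymmAlg ℂ 𝔥),
      (∀ a b, D' (a * b) = D' a * b + a * D' b) →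
      (∀ u : 𝔥, D' (symmMk ℂ 𝔥 u) = algebraMap ℂ _ (x u)) →
      ∀ Gs : W → SymmAlg ℂ 𝔥,
      (∀ s : W, IsReflection (s : 𝔥 ≃ₗ[ℂ] 𝔥) →
        symmMk ℂ 𝔥 (αv s) * Gs s = g - symmActH 𝔥 ((s⁻¹ : W) : 𝔥 ≃ₗ[ℂ] 𝔥) g) →
      rcaIotaY W κ c α αv g * rcaX W κ c α αv x -
          rcaX W κ c α αv x * rcaIotaY W κ c α αv g =
        κ • rcaIotaY W κ c α αv (D' g) -
          ∑ s ∈ Finset.univ.filter (fun s : W => IsReflection (s : 𝔥 ≃ₗ[ℂ] 𝔥)),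
            (c s * x (αv s)) • (rcaT W κ c α αv s * rcaIotaY W κ c α αv (Gs s))) := by
  refine ⟨fun v f D hD hDf gs hgs => ?_, fun x g D hD hDg Gs hGs => ?_⟩
  · exact rcaY_mul_rcaIotaX_sub W κ c α αv hα v (Derivation.ofLeibniz D hD) hDf hgs
  · exact rcaIotaY_mul_rcaX_sub W κ c α αv hα x (Derivation.ofLeibniz D hD) hDg hGs

end
end

section
/- The elements z_1, …, z_n of H are pairwise commutative: z_i z_j = z_j z_i for all 1 ≤ i, j ≤ n. -/
/-- `ζ = e^{2πi/r}`. -/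
noncomputable def zeta (r : ℕ) : ℂ := Complex.exp (2 * Real.pi * Complex.I / r)

theorem zeta_pow_self {r : ℕ} (hr : 0 < r) : zeta r ^ r = 1 := by
  rw [zeta, ← Complex.exp_nat_mul, mul_comm, div_mul_cancel₀, Complex.exp_two_pi_mul_I]
  exact_mod_cast Nat.cast_ne_zero.mpr hr.ne'

theorem zeta_zpow_root (r : ℕ) (l : ℤ) : (zeta r ^ l) ^ r = 1 := by
  rcases Nat.eq_zero_or_pos r with h | h
  · rw [h, pow_zero]
  · rw [← zpow_natCast, ← zpow_mul, mul_comm, zpow_mul, zpow_natCast,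
      zeta_pow_self h, one_zpow]

/-- The elements of `G(r,1,n)`: `n × n` monomial matrices whose nonzero entries are
`r`-th roots of unity. -/
def IsGMonomial (r n : ℕ) (w : Matrix (Fin n) (Fin n) ℂ) : Prop :=
  ∃ (σ : Equiv.Perm (Fin n)) (a : Fin n → ℂ), (∀ i, a i ^ r = 1) ∧
    ∀ i j, w i j = if i = σ j then a j else 0

theorem IsGMonomial.mul {r n : ℕ} {w v : Matrix (Fin n) (Fin n) ℂ}
    (hw : IsGMonomial r n w) (hv : IsGMonomial r n v) : IsGMonomial r n (w * v) := by
  obtain ⟨σ, a, ha, hwe⟩ := hw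
  obtain ⟨τ, b, hb, hve⟩ := hv
  refine ⟨σ * τ, fun j => a (τ j) * b j, fun j => by rw [mul_pow, ha, hb, one_mul], ?_⟩
  intro i j
  rw [Matrix.mul_apply, Finset.sum_eq_single (τ j)]
  · rw [hwe, hve, if_pos rfl, Equiv.Perm.mul_apply]
    simp [ite_mul]
  · intro k _ hk
    rw [hve, if_neg hk, mul_zero]
  · simp

/-- The diagonal matrix `ζ_i^l`, with `ζ^l` in position `i` and `1`'s elsewhere. -/
noncomputable def zmat (r n : ℕ) (i : Fin n) (l : ℤ) : Matrix (Fin n) (Fin n) ℂ :=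
  Matrix.diagonal (fun a => if a = i then zeta r ^ l else 1)

theorem isGMonomial_zmat (r : ℕ) {n : ℕ} (i : Fin n) (l : ℤ) :
    IsGMonomial r n (zmat r n i l) := by
  refine ⟨1, fun b => if b = i then zeta r ^ l else 1, ?_, ?_⟩
  · intro b
    dsimp only
    split
    · exact zeta_zpow_root r l
    · exact one_pow r
  · intro a b
    rcases eq_or_ne a b with h | h
    · subst h; simp [zmat, Matrix.diagonal_apply]
    · simp [zmat, Matrix.diagonal_apply_ne _ h, Equiv.Perm.one_apply, h]

/-- The transposition (permutation) matrix `s_{ij}` interchanging coordinates `i` and `j`. -/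
def smat {n : ℕ} (i j : Fin n) : Matrix (Fin n) (Fin n) ℂ :=
  Matrix.of fun a b => if a = Equiv.swap i j b then 1 else 0

theorem isGMonomial_smat (r : ℕ) {n : ℕ} (i j : Fin n) : IsGMonomial r n (smat i j) :=
  ⟨Equiv.swap i j, fun _ => 1, fun _ => one_pow r, fun a b => by simp [smat]⟩

/-- The group `G(r,1,n)` of monomial matrices, as a subtype of matrices. -/
def GMon (r n : ℕ) : Type := {w : Matrix (Fin n) (Fin n) ℂ // IsGMonomial r n w}

/-- `ζ_i^l` as an element of `G(r,1,n)`. -/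
noncomputable def zetaW (r : ℕ) {n : ℕ} (i : Fin n) (l : ℤ) : GMon r n :=
  ⟨zmat r n i l, isGMonomial_zmat r i l⟩

/-- `s_{ij}` as an element of `G(r,1,n)`. -/
noncomputable def sW (r : ℕ) {n : ℕ} (i j : Fin n) : GMon r n :=
  ⟨smat i j, isGMonomial_smat r i j⟩

/-- The reflection `ζ_i^l s_{ij} ζ_i^{-l}` as an element of `G(r,1,n)`. -/
noncomputable def reflW (r : ℕ) {n : ℕ} (i j : Fin n) (l : ℤ) : GMon r n :=
  ⟨zmat r n i l * smat i j * zmat r n i (-l),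
    ((isGMonomial_zmat r i l).mul (isGMonomial_smat r i j)).mul (isGMonomial_zmat r i (-l))⟩

/-- The element `ζ_i^l ζ_j^{-l}` of `G(r,1,n)`. -/
noncomputable def pairW (r : ℕ) {n : ℕ} (i j : Fin n) (l : ℤ) : GMon r n :=
  ⟨zmat r n i l * zmat r n j (-l),
    (isGMonomial_zmat r i l).mul (isGMonomial_zmat r j (-l))⟩

/-- Generators of the rational Cherednik algebra of `G(r,1,n)`:
`x_1, …, x_n`, `y_1, …, y_n` and `t_w` for `w ∈ G(r,1,n)`. -/
inductive CGen (r n : ℕ) where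
  | X (i : Fin n) : CGen r n
  | Y (i : Fin n) : CGen r n
  | T (w : GMon r n) : CGen r n

/-- The defining relations of the rational Cherednik algebra of `G(r,1,n)` with
parameters `κ, c₀, c_1, …, c_{r-1}`. -/
inductive CRel (r n : ℕ) (κ c₀ : ℂ) (c : ℕ → ℂ) :
    FreeAlgebra ℂ (CGen r n) → FreeAlgebra ℂ (CGen r n) → Prop
  | t_mul (u w v : GMon r n) : u.1 = w.1 * v.1 → CRel r n κ c₀ c
      (FreeAlgebra.ι ℂ (.T u)) (FreeAlgebra.ι ℂ (.T w) * FreeAlgebra.ι ℂ (.T v))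
  | t_one (u : GMon r n) : u.1 = 1 → CRel r n κ c₀ c (FreeAlgebra.ι ℂ (.T u)) 1
  | t_x (w : GMon r n) (i : Fin n) : CRel r n κ c₀ c
      (FreeAlgebra.ι ℂ (.T w) * FreeAlgebra.ι ℂ (.X i))
      (∑ j, (w.1⁻¹ i j) • (FreeAlgebra.ι ℂ (.X j) * FreeAlgebra.ι ℂ (.T w)))
  | t_y (w : GMon r n) (i : Fin n) : CRel r n κ c₀ c
      (FreeAlgebra.ι ℂ (.T w) * FreeAlgebra.ι ℂ (.Y i))
      (∑ j, (w.1 j i) • (FreeAlgebra.ι ℂ (.Y j) * FreeAlgebra.ι ℂ (.T w)))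
  | xx (i j : Fin n) : CRel r n κ c₀ c
      (FreeAlgebra.ι ℂ (.X i) * FreeAlgebra.ι ℂ (.X j))
      (FreeAlgebra.ι ℂ (.X j) * FreeAlgebra.ι ℂ (.X i))
  | yy (i j : Fin n) : CRel r n κ c₀ c
      (FreeAlgebra.ι ℂ (.Y i) * FreeAlgebra.ι ℂ (.Y j))
      (FreeAlgebra.ι ℂ (.Y j) * FreeAlgebra.ι ℂ (.Y i))
  | yx_ne (i j : Fin n) : i ≠ j → CRel r n κ c₀ c
      (FreeAlgebra.ι ℂ (.Y i) * FreeAlgebra.ι ℂ (.X j))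
      (FreeAlgebra.ι ℂ (.X j) * FreeAlgebra.ι ℂ (.Y i) +
        c₀ • ∑ l ∈ Finset.range r,
          (zeta r ^ (-(l : ℤ))) • FreeAlgebra.ι ℂ (.T (reflW r i j (l : ℤ))))
  | yx_eq (i : Fin n) : CRel r n κ c₀ c
      (FreeAlgebra.ι ℂ (.Y i) * FreeAlgebra.ι ℂ (.X i))
      (FreeAlgebra.ι ℂ (.X i) * FreeAlgebra.ι ℂ (.Y i) + κ • (1 : FreeAlgebra ℂ (CGen r n))
        - ∑ l ∈ Finset.Ico 1 r,
            (c l * (1 - zeta r ^ (-(l : ℤ)))) • FreeAlgebra.ι ℂ (.T (zetaW r i (l : ℤ)))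
        - c₀ • ∑ j ∈ Finset.univ.erase i, ∑ l ∈ Finset.range r,
            FreeAlgebra.ι ℂ (.T (reflW r i j (l : ℤ))))

variable (r n : ℕ) (κ c₀ : ℂ) (c : ℕ → ℂ)

/-- The image of `x_i` in the rational Cherednik algebra of `G(r,1,n)`. -/
noncomputable def cX (i : Fin n) : RingQuot (CRel r n κ c₀ c) :=
  RingQuot.mkAlgHom ℂ (CRel r n κ c₀ c) (FreeAlgebra.ι ℂ (.X i))

/-- The image of `y_i` in the rational Cherednik algebra of `G(r,1,n)`. -/
noncomputable def cY (i : Fin n) : RingQuot (CRel r n κ c₀ c) :=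
  RingQuot.mkAlgHom ℂ (CRel r n κ c₀ c) (FreeAlgebra.ι ℂ (.Y i))

/-- The image of `t_w` in the rational Cherednik algebra of `G(r,1,n)`. -/
noncomputable def cT (w : GMon r n) : RingQuot (CRel r n κ c₀ c) :=
  RingQuot.mkAlgHom ℂ (CRel r n κ c₀ c) (FreeAlgebra.ι ℂ (.T w))

/-- `φ_i = Σ_{j<i} Σ_{l=0}^{r-1} t_{ζ_i^l s_{ij} ζ_i^{-l}}`. -/
noncomputable def cPhi (i : Fin n) : RingQuot (CRel r n κ c₀ c) :=
  ∑ j ∈ Finset.univ.filter (fun j : Fin n => j < i), ∑ l ∈ Finset.range r,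
    cT r n κ c₀ c (reflW r i j (l : ℤ))

/-- The Dunkl–Opdam–Cherednik element `z_i = y_i x_i + c₀ φ_i`. -/
noncomputable def cz (i : Fin n) : RingQuot (CRel r n κ c₀ c) :=
  cY r n κ c₀ c i * cX r n κ c₀ c i + c₀ • cPhi r n κ c₀ c i

/-- `π_i = Σ_{l=0}^{r-1} t_{ζ_i^l ζ_{i+1}^{-l}}` (here with the two indices `i`, `i+1`
passed separately). -/
noncomputable def cPi (i j : Fin n) : RingQuot (CRel r n κ c₀ c) :=
  ∑ l ∈ Finset.range r, cT r n κ c₀ c (pairW r i j (l : ℤ))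

/-- The idempotent `ε_{ij} = (1/r) Σ_{l=0}^{r-1} ζ^{-lj} t_{ζ_i^l}`. -/
noncomputable def cEps (i : Fin n) (j : ℤ) : RingQuot (CRel r n κ c₀ c) :=
  (r : ℂ)⁻¹ • ∑ l ∈ Finset.range r, (zeta r ^ (-(l : ℤ) * j)) • cT r n κ c₀ c (zetaW r i (l : ℤ))

/-- The reparametrised constants `d_j = Σ_{l=1}^{r-1} ζ^{lj} c_l`. -/
noncomputable def dpar (j : ℤ) : ℂ := ∑ l ∈ Finset.Ico 1 r, zeta r ^ ((l : ℤ) * j) * c l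

/-!
Write `z_i = y_i x_i + c₀ φ_i` with `φ_i = Σ_{j<i} S_{ij}`, where `S_{ij}` is the sum of the
`r` reflections `t_{ζ_i^l s_{ij} ζ_i^{-l}}`. Every `t_w` moves `y_k x_k` to `y_{w(k)} x_{w(k)}`,
so `S_{ij}` intertwines `y_k x_k` with `y_{s_{ij}(k)} x_{s_{ij}(k)}`; conjugating a reflection by
`ζ_a^l s_{ak} ζ_a^{-l}` only shifts `l`, so `S_{bk} S_{ak} = S_{ak} S_{ba}`; and `S_{ij} = S_{ji}`.
For `a < b` these give `[y_a x_a, y_b x_b] = c₀ (y_b x_b S_{ab} - y_a x_a S_{ba})`,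
`[y_a x_a, φ_b] = (y_a x_a - y_b x_b) S_{ba}`, `[φ_a, y_b x_b] = 0` and `[φ_a, φ_b] = 0`, and
the terms of `[z_a, z_b]` cancel.
-/

open Finset

section Monomial

variable {n : ℕ}

def monomialMatrix (σ : Equiv.Perm (Fin n)) (a : Fin n → ℂ) : Matrix (Fin n) (Fin n) ℂ :=
  Matrix.of fun x y => if x = σ y then a y else 0

theorem monomialMatrix_mul (σ τ : Equiv.Perm (Fin n)) (a b : Fin n → ℂ) :
    monomialMatrix σ a * monomialMatrix τ b =
      monomialMatrix (σ * τ) (fun y => a (τ y) * b y) := by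
  ext x y
  rw [Matrix.mul_apply, sum_eq_single (τ y)]
  · by_cases hx : x = σ (τ y) <;> simp [monomialMatrix, hx]
  · intro k _ hk
    simp [monomialMatrix, hk]
  · simp

theorem monomialMatrix_one : monomialMatrix 1 (fun _ : Fin n => (1 : ℂ)) = 1 := by
  ext x y
  by_cases h : x = y <;> simp [monomialMatrix, Matrix.one_apply, h]

theorem monomialMatrix_inv_apply {σ : Equiv.Perm (Fin n)} {a : Fin n → ℂ} (ha : ∀ y, a y ≠ 0)
    (x y : Fin n) : (monomialMatrix σ a)⁻¹ x y = if y = σ x then (a x)⁻¹ else 0 := by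
  have hinv : monomialMatrix σ⁻¹ (fun y => (a (σ⁻¹ y))⁻¹) * monomialMatrix σ a = 1 := by
    rw [monomialMatrix_mul, inv_mul_cancel, ← monomialMatrix_one]
    congr
    ext y
    simp [ha]
  rw [Matrix.inv_eq_left_inv hinv]
  obtain rfl | h := eq_or_ne y (σ x)
  · simp [monomialMatrix]
  · simp [monomialMatrix, Equiv.eq_symm_apply, Ne.symm h, h]

end Monomial

section Reflection

variable {r n : ℕ}

theorem zeta_ne_zero (r : ℕ) : zeta r ≠ 0 := Complex.exp_ne_zero _

/-- Recording the coefficients of `ζ_i^l s_{ij} ζ_i^{-l}` as exponents of `ζ` turns identities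
between products of reflections into identities between integers. -/
def reflExponent (i j : Fin n) (l : ℤ) (y : Fin n) : ℤ :=
  l * ((if y = j then 1 else 0) - if y = i then 1 else 0)

theorem reflW_val (i j : Fin n) (l : ℤ) :
    (reflW r i j l).1 =
      monomialMatrix (Equiv.swap i j) (fun y => zeta r ^ reflExponent i j l y) := by
  ext x y
  simp only [reflW, zmat, smat, Matrix.mul_diagonal, Matrix.diagonal_mul, monomialMatrix,
    Matrix.of_apply, reflExponent]
  split_ifs <;> simp_all [Equiv.swap_apply_def, zpow_neg,
    mul_inv_cancel₀ (zpow_ne_zero l (zeta_ne_zero r))]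

theorem reflW_val_mul_reflW_val (i j i' j' : Fin n) (l l' : ℤ) :
    (reflW r i j l).1 * (reflW r i' j' l').1 =
      monomialMatrix (Equiv.swap i j * Equiv.swap i' j')
        (fun y => zeta r ^ (reflExponent i j l (Equiv.swap i' j' y) + reflExponent i' j' l' y)) := by
  simp only [reflW_val, monomialMatrix_mul, zpow_add₀ (zeta_ne_zero r)]

theorem reflW_val_comm (i j : Fin n) (l : ℤ) : (reflW r i j l).1 = (reflW r j i (-l)).1 := by
  rw [reflW_val, reflW_val, Equiv.swap_comm]
  congr
  ext y
  simp only [reflExponent]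
  split_ifs <;> grind

theorem reflW_add_period (i j : Fin n) (l : ℤ) : reflW r i j (l + r) = reflW r i j l := by
  apply Subtype.ext
  rw [reflW_val, reflW_val]
  congr
  ext y
  have hroot (e : ℤ) : zeta r ^ ((r : ℤ) * e) = 1 := by
    rw [mul_comm, zpow_mul, zpow_natCast, zeta_zpow_root]
  rw [reflExponent, reflExponent, add_mul, zpow_add₀ (zeta_ne_zero r), hroot, mul_one]

theorem reflW_val_mul_reflW_val_of_ne {a b k : Fin n} (hab : a ≠ b) (hak : a ≠ k) (hbk : b ≠ k)
    (p l : ℤ) :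
    (reflW r b k p).1 * (reflW r a k l).1 = (reflW r a k l).1 * (reflW r b a (p - l)).1 := by
  rw [reflW_val_mul_reflW_val, reflW_val_mul_reflW_val]
  congr 1
  · ext x
    simp only [Equiv.Perm.mul_apply, Equiv.swap_apply_def]
    split_ifs <;> grind
  · ext y
    simp only [reflExponent, Equiv.swap_apply_def]
    split_ifs <;> grind

theorem reflW_val_commute_of_disjoint {a k b m : Fin n} (hab : a ≠ b) (ham : a ≠ m) (hkb : k ≠ b)
    (hkm : k ≠ m) (l p : ℤ) :
    (reflW r a k l).1 * (reflW r b m p).1 = (reflW r b m p).1 * (reflW r a k l).1 := by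
  rw [reflW_val_mul_reflW_val, reflW_val_mul_reflW_val]
  congr 1
  · ext x
    simp only [Equiv.Perm.mul_apply, Equiv.swap_apply_def]
    split_ifs <;> grind
  · ext y
    simp only [reflExponent, Equiv.swap_apply_def]
    split_ifs <;> grind

end Reflection

namespace Function.Periodic

variable {A : Type*} [AddCommGroup A] {f : ℤ → A} {r : ℕ}

theorem sum_range_add_one (hf : Periodic f r) :
    ∑ p ∈ range r, f (p + 1) = ∑ p ∈ range r, f p := by
  have h := (sum_range_succ' (fun p : ℕ => f p) r).symm.trans (sum_range_succ (fun p : ℕ => f p) r)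
  push_cast at h
  rwa [hf.eq, add_left_inj] at h

theorem sum_range_add (hf : Periodic f r) (m : ℤ) :
    ∑ p ∈ range r, f (p + m) = ∑ p ∈ range r, f p := by
  induction m using Int.induction_on with
  | zero => simp
  | succ m ih =>
    rw [← ih, ← (hf.add_const (m : ℤ)).sum_range_add_one]
    exact sum_congr rfl fun p _ => congr_arg f (by ring)
  | pred m ih =>
    rw [← ih, ← (hf.add_const (-(m : ℤ) - 1)).sum_range_add_one]
    exact sum_congr rfl fun p _ => congr_arg f (by ring)

theorem sum_range_neg (hf : Periodic f r) : ∑ p ∈ range r, f (-p) = ∑ p ∈ range r, f p := by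
  rw [← hf.sum_range_add_one, ← sum_range_reflect (fun p : ℕ => f (p + 1))]
  refine sum_congr rfl fun p hp => ?_
  have hpr : ((r - 1 - p : ℕ) : ℤ) + 1 = r - p := by
    have := mem_range.1 hp
    omega
  rw [hpr, hf.sub_eq']

end Function.Periodic

section Relations

variable {r n : ℕ} {κ c₀ : ℂ} {c : ℕ → ℂ}

local notation "𝕏" => cX r n κ c₀ c
local notation "𝕐" => cY r n κ c₀ c
local notation "𝕋" => cT r n κ c₀ c

theorem cT_mul_cT (w v : GMon r n) : 𝕋 w * 𝕋 v = 𝕋 ⟨w.1 * v.1, w.2.mul v.2⟩ := by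
  simpa [cT] using (RingQuot.mkAlgHom_rel ℂ (CRel.t_mul (κ := κ) (c₀ := c₀) (c := c) _ w v rfl)).symm

theorem cT_mul_cT_congr {w v w' v' : GMon r n} (h : w.1 * v.1 = w'.1 * v'.1) :
    𝕋 w * 𝕋 v = 𝕋 w' * 𝕋 v' := by
  rw [cT_mul_cT, cT_mul_cT]
  congr 1
  exact Subtype.ext h

theorem cT_mul_cX (w : GMon r n) (i : Fin n) : 𝕋 w * 𝕏 i = ∑ j, (w.1⁻¹ i j) • (𝕏 j * 𝕋 w) := by
  simpa [cT, cX] using RingQuot.mkAlgHom_rel ℂ (CRel.t_x (κ := κ) (c₀ := c₀) (c := c) w i)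

theorem cT_mul_cY (w : GMon r n) (i : Fin n) : 𝕋 w * 𝕐 i = ∑ j, (w.1 j i) • (𝕐 j * 𝕋 w) := by
  simpa [cT, cY] using RingQuot.mkAlgHom_rel ℂ (CRel.t_y (κ := κ) (c₀ := c₀) (c := c) w i)

theorem cX_mul_comm (i j : Fin n) : 𝕏 i * 𝕏 j = 𝕏 j * 𝕏 i := by
  simpa [cX] using RingQuot.mkAlgHom_rel ℂ (CRel.xx (r := r) (κ := κ) (c₀ := c₀) (c := c) i j)

theorem cY_mul_comm (i j : Fin n) : 𝕐 i * 𝕐 j = 𝕐 j * 𝕐 i := by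
  simpa [cY] using RingQuot.mkAlgHom_rel ℂ (CRel.yy (r := r) (κ := κ) (c₀ := c₀) (c := c) i j)

theorem cY_mul_cX_of_ne {i j : Fin n} (h : i ≠ j) :
    𝕐 i * 𝕏 j = 𝕏 j * 𝕐 i +
      c₀ • ∑ l ∈ range r, (zeta r ^ (-(l : ℤ))) • 𝕋 (reflW r i j l) := by
  simpa [cX, cY, cT] using RingQuot.mkAlgHom_rel ℂ (CRel.yx_ne (κ := κ) (c := c) i j h)

end Relations

noncomputable def cYX (i : Fin n) : RingQuot (CRel r n κ c₀ c) :=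
  cY r n κ c₀ c i * cX r n κ c₀ c i

noncomputable def cReflSum (i j : Fin n) : RingQuot (CRel r n κ c₀ c) :=
  ∑ l ∈ range r, cT r n κ c₀ c (reflW r i j l)

theorem cz_eq (i : Fin n) : cz r n κ c₀ c i = cYX r n κ c₀ c i + c₀ • cPhi r n κ c₀ c i := rfl

theorem cPhi_eq (i : Fin n) :
    cPhi r n κ c₀ c i = ∑ j ∈ univ.filter (· < i), cReflSum r n κ c₀ c i j := rfl

section Commutation

variable {r n : ℕ} {κ c₀ : ℂ} {c : ℕ → ℂ}

local notation "𝕏" => cX r n κ c₀ c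
local notation "𝕐" => cY r n κ c₀ c
local notation "𝕋" => cT r n κ c₀ c
local notation "ℙ" => cYX r n κ c₀ c
local notation "𝕊" => cReflSum r n κ c₀ c

section MonomialAction

variable {w : GMon r n} {σ : Equiv.Perm (Fin n)} {a : Fin n → ℂ}

theorem cT_mul_cX_of_val_eq (ha : ∀ y, a y ≠ 0) (hw : w.1 = monomialMatrix σ a) (k : Fin n) :
    𝕋 w * 𝕏 k = (a k)⁻¹ • (𝕏 (σ k) * 𝕋 w) := by
  rw [cT_mul_cX, sum_eq_single (σ k)]
  · simp [hw, monomialMatrix_inv_apply ha]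
  · intro j _ hj
    simp [hw, monomialMatrix_inv_apply ha, hj]
  · simp

theorem cT_mul_cY_of_val_eq (hw : w.1 = monomialMatrix σ a) (k : Fin n) :
    𝕋 w * 𝕐 k = a k • (𝕐 (σ k) * 𝕋 w) := by
  rw [cT_mul_cY, sum_eq_single (σ k)]
  · simp [hw, monomialMatrix]
  · intro j _ hj
    simp [hw, monomialMatrix, hj]
  · simp

theorem cT_mul_cYX_of_val_eq (ha : ∀ y, a y ≠ 0) (hw : w.1 = monomialMatrix σ a) (k : Fin n) :
    𝕋 w * ℙ k = ℙ (σ k) * 𝕋 w := by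
  rw [cYX, ← mul_assoc, cT_mul_cY_of_val_eq hw, smul_mul_assoc, mul_assoc,
    cT_mul_cX_of_val_eq ha hw, mul_smul_comm, smul_smul, mul_inv_cancel₀ (ha k), one_smul,
    ← mul_assoc, cYX]

end MonomialAction

theorem cReflSum_mul_cYX (i j k : Fin n) : 𝕊 i j * ℙ k = ℙ (Equiv.swap i j k) * 𝕊 i j := by
  rw [cReflSum, sum_mul, mul_sum]
  exact sum_congr rfl fun l _ =>
    cT_mul_cYX_of_val_eq (fun _ => zpow_ne_zero _ (zeta_ne_zero r)) (reflW_val i j l) k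

theorem cReflSum_comm (i j : Fin n) : 𝕊 i j = 𝕊 j i := by
  have hper : Function.Periodic (fun l : ℤ => 𝕋 (reflW r j i l)) r := fun l => by
    simp only [reflW_add_period]
  rw [cReflSum, cReflSum, ← hper.sum_range_neg]
  exact sum_congr rfl fun l _ => congr_arg 𝕋 (Subtype.ext (reflW_val_comm i j l))

theorem cReflSum_mul_cT_reflW {a b k : Fin n} (hab : a ≠ b) (hak : a ≠ k) (hbk : b ≠ k) (l : ℤ) :
    𝕊 b k * 𝕋 (reflW r a k l) = 𝕋 (reflW r a k l) * 𝕊 b a := by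
  have hper : Function.Periodic (fun p : ℤ => 𝕋 (reflW r a k l) * 𝕋 (reflW r b a p)) r :=
    fun p => by simp only [reflW_add_period]
  rw [cReflSum, cReflSum, sum_mul, mul_sum, ← hper.sum_range_add (-l)]
  refine sum_congr rfl fun p _ => ?_
  rw [← sub_eq_add_neg]
  exact cT_mul_cT_congr (reflW_val_mul_reflW_val_of_ne hab hak hbk p l)

theorem cReflSum_mul_cReflSum_of_ne {a b k : Fin n} (hab : a ≠ b) (hak : a ≠ k) (hbk : b ≠ k) :
    𝕊 b k * 𝕊 a k = 𝕊 a k * 𝕊 b a := by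
  change 𝕊 b k * ∑ l ∈ range r, 𝕋 (reflW r a k l) = (∑ l ∈ range r, 𝕋 (reflW r a k l)) * 𝕊 b a
  rw [mul_sum, sum_mul]
  exact sum_congr rfl fun l _ => cReflSum_mul_cT_reflW hab hak hbk l

theorem cReflSum_mul_cReflSum_of_disjoint {a k b m : Fin n} (hab : a ≠ b) (ham : a ≠ m)
    (hkb : k ≠ b) (hkm : k ≠ m) : 𝕊 a k * 𝕊 b m = 𝕊 b m * 𝕊 a k := by
  rw [cReflSum, cReflSum, sum_mul_sum, sum_mul_sum, sum_comm]
  exact sum_congr rfl fun p _ => sum_congr rfl fun l _ =>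
    cT_mul_cT_congr (reflW_val_commute_of_disjoint hab ham hkb hkm l p)

theorem cYX_mul_cYX_of_ne {a b : Fin n} (h : a ≠ b) :
    ℙ a * ℙ b = 𝕐 a * 𝕐 b * 𝕏 a * 𝕏 b - c₀ • (ℙ a * 𝕊 b a) := by
  have hxy : 𝕏 a * 𝕐 b =
      𝕐 b * 𝕏 a - c₀ • ∑ l ∈ range r, (zeta r ^ (-(l : ℤ))) • 𝕋 (reflW r b a l) := by
    rw [cY_mul_cX_of_ne h.symm, add_sub_cancel_right]
  have htx : (∑ l ∈ range r, (zeta r ^ (-(l : ℤ))) • 𝕋 (reflW r b a l)) * 𝕏 b = 𝕏 a * 𝕊 b a := by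
    rw [sum_mul, cReflSum, mul_sum]
    refine sum_congr rfl fun l _ => ?_
    have hexp : reflExponent b a l b = -l := by simp [reflExponent, h.symm]
    rw [smul_mul_assoc, cT_mul_cX_of_val_eq (fun _ => zpow_ne_zero _ (zeta_ne_zero r))
      (reflW_val b a l), Equiv.swap_apply_left, smul_smul, hexp,
      mul_inv_cancel₀ (zpow_ne_zero _ (zeta_ne_zero r)), one_smul]
  calc ℙ a * ℙ b = 𝕐 a * (𝕏 a * 𝕐 b) * 𝕏 b := by simp only [cYX, mul_assoc]
    _ = 𝕐 a * 𝕐 b * 𝕏 a * 𝕏 b -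
        c₀ • (𝕐 a * ((∑ l ∈ range r, (zeta r ^ (-(l : ℤ))) • 𝕋 (reflW r b a l)) * 𝕏 b)) := by
      simp only [hxy, sub_mul, mul_sub, smul_mul_assoc, mul_smul_comm, mul_assoc]
    _ = 𝕐 a * 𝕐 b * 𝕏 a * 𝕏 b - c₀ • (ℙ a * 𝕊 b a) := by rw [htx, ← mul_assoc, cYX]

theorem cYX_mul_cYX_comm {a b : Fin n} (h : a ≠ b) :
    ℙ a * ℙ b = ℙ b * ℙ a + c₀ • (ℙ b * 𝕊 a b - ℙ a * 𝕊 b a) := by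
  have hyyxx : 𝕐 a * 𝕐 b * 𝕏 a * 𝕏 b = 𝕐 b * 𝕐 a * 𝕏 b * 𝕏 a := by
    rw [cY_mul_comm, mul_assoc _ (𝕏 a), cX_mul_comm, ← mul_assoc]
  rw [cYX_mul_cYX_of_ne h, cYX_mul_cYX_of_ne h.symm, hyyxx]
  module

theorem cYX_mul_cPhi_of_lt {a b : Fin n} (hab : a < b) :
    ℙ a * cPhi r n κ c₀ c b = cPhi r n κ c₀ c b * ℙ a + (ℙ a - ℙ b) * 𝕊 b a := by
  rw [← sub_eq_iff_eq_add', cPhi_eq, mul_sum, sum_mul, ← sum_sub_distrib,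
    sum_eq_single_of_mem a (by simpa using hab)]
  · rw [cReflSum_mul_cYX, Equiv.swap_apply_right, sub_mul]
  · intro m _ hma
    rw [cReflSum_mul_cYX, Equiv.swap_apply_of_ne_of_ne hab.ne (Ne.symm hma), sub_self]

theorem cPhi_mul_cYX_of_lt {a b : Fin n} (hab : a < b) :
    cPhi r n κ c₀ c a * ℙ b = ℙ b * cPhi r n κ c₀ c a := by
  rw [cPhi_eq, mul_sum, sum_mul]
  refine sum_congr rfl fun k hk => ?_
  have hkb : k < b := (mem_filter.1 hk).2.trans hab
  rw [cReflSum_mul_cYX, Equiv.swap_apply_of_ne_of_ne hab.ne' hkb.ne']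

theorem cPhi_mul_cPhi_of_lt {a b : Fin n} (hab : a < b) :
    cPhi r n κ c₀ c a * cPhi r n κ c₀ c b = cPhi r n κ c₀ c b * cPhi r n κ c₀ c a := by
  rw [cPhi_eq, cPhi_eq, sum_mul_sum, sum_mul_sum, sum_comm (s := univ.filter (· < b)),
    ← sub_eq_zero, ← sum_sub_distrib]
  refine sum_eq_zero fun k hk => ?_
  have hka : k < a := (mem_filter.1 hk).2
  have hkb : k < b := hka.trans hab
  rw [← sum_sub_distrib, sum_eq_add_of_mem k a (by simpa using hkb) (by simpa using hab) hka.ne]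
  · rw [cReflSum_mul_cReflSum_of_ne hab.ne hka.ne' hkb.ne', cReflSum_comm a k,
      cReflSum_mul_cReflSum_of_ne hkb.ne hka.ne hab.ne']
    abel
  · rintro m hm ⟨hmk, hma⟩
    rw [cReflSum_mul_cReflSum_of_disjoint hab.ne (Ne.symm hma) hkb.ne (Ne.symm hmk), sub_self]

theorem cz_mul_cz_of_lt {a b : Fin n} (hab : a < b) :
    cz r n κ c₀ c a * cz r n κ c₀ c b = cz r n κ c₀ c b * cz r n κ c₀ c a := by
  simp only [cz_eq, add_mul, mul_add, smul_mul_assoc, mul_smul_comm, cYX_mul_cYX_comm hab.ne,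
    cYX_mul_cPhi_of_lt hab, cPhi_mul_cYX_of_lt hab, cPhi_mul_cPhi_of_lt hab, cReflSum_comm a b,
    sub_mul]
  module

end Commutation

theorem stmt7 (i j : Fin n) :
    cz r n κ c₀ c i * cz r n κ c₀ c j = cz r n κ c₀ c j * cz r n κ c₀ c i := by
  rcases lt_trichotomy i j with h | rfl | h
  · exact cz_mul_cz_of_lt h
  · rfl
  · exact (cz_mul_cz_of_lt h).symm
end

section
/- Let ℂ[Z_1, …, Z_n] be a commutative polynomial ring on which S_n acts by permuting the variables, and for f ∈ ℂ[Z_1, …, Z_n] let f(z) ∈ H denote the evaluation at the pairwise commuting elements z_1, …, z_n. Then for every f ∈ ℂ[Z_1, …, Z_n] and 1 ≤ i ≤ n−1: t_{s_i} f(z) = (s_i·f)(z) t_{s_i} − c_0 π_i g(z), where g ∈ ℂ[Z_1, …, Z_n] is the unique polynomial with (Z_i − Z_{i+1}) g = f − s_i·f. -/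
variable (r n : ℕ) (κ c₀ : ℂ) (c : ℕ → ℂ)

/-- Evaluation of a polynomial `f ∈ ℂ[Z_1, …, Z_n]` at the pairwise commuting elements
`z_1, …, z_n` of the rational Cherednik algebra. -/
noncomputable def evalZ (f : MvPolynomial (Fin n) ℂ) : RingQuot (CRel r n κ c₀ c) :=
  (AddMonoidAlgebra.coeff f).sum fun m a => a • (List.ofFn fun i : Fin n => cz r n κ c₀ c i ^ m i).prod

namespace Stmt9Aux
open Finset Equiv

/-! ### zeta facts -/

lemma zeta_ne_zero (r : ℕ) : zeta r ≠ 0 := Complex.exp_ne_zero _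

lemma zeta_zpow_ne_zero (r : ℕ) (l : ℤ) : zeta r ^ l ≠ 0 := zpow_ne_zero _ (zeta_ne_zero r)

lemma zeta_zpow_add_nat {r : ℕ} (hr : 1 ≤ r) (l : ℤ) : zeta r ^ (l + r) = zeta r ^ l := by
  rw [zpow_add₀ (zeta_ne_zero r), zpow_natCast, zeta_pow_self (by omega), mul_one]

/-! ### mono normal form for monomial matrices -/

def mono {n : ℕ} (σ : Equiv.Perm (Fin n)) (a : Fin n → ℂ) : Matrix (Fin n) (Fin n) ℂ :=
  Matrix.of fun p q => if p = σ q then a q else 0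

lemma mono_apply {n : ℕ} (σ : Equiv.Perm (Fin n)) (a : Fin n → ℂ) (p q : Fin n) :
    mono σ a p q = if p = σ q then a q else 0 := rfl

lemma mono_mul {n : ℕ} (σ τ : Equiv.Perm (Fin n)) (a b : Fin n → ℂ) :
    mono σ a * mono τ b = mono (σ * τ) (fun q => a (τ q) * b q) := by
  ext p q
  rw [Matrix.mul_apply, Finset.sum_eq_single (τ q)]
  · simp [mono, ite_mul, Equiv.Perm.mul_apply]
    rfl
  · intro k _ hk
    rw [mono_apply, mono_apply, if_neg hk, mul_zero]
  · simp

lemma mono_congr {n : ℕ} {σ τ : Equiv.Perm (Fin n)} {a b : Fin n → ℂ}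
    (h1 : ∀ q, σ q = τ q) (h2 : ∀ q, a q = b q) : mono σ a = mono τ b := by
  have hσ : σ = τ := Equiv.ext h1
  have ha : a = b := funext h2
  rw [hσ, ha]

lemma mono_one {n : ℕ} : mono (n := n) 1 (fun _ => 1) = 1 := by
  ext p q
  by_cases h : p = q <;> simp [mono, Matrix.one_apply, h]

lemma mono_inv {n : ℕ} (σ : Equiv.Perm (Fin n)) (a : Fin n → ℂ) (ha : ∀ q, a q ≠ 0) :
    (mono σ a)⁻¹ = mono σ⁻¹ (fun p => (a (σ⁻¹ p))⁻¹) := by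
  apply Matrix.inv_eq_left_inv
  rw [mono_mul]
  rw [show (σ⁻¹ * σ : Equiv.Perm (Fin n)) = 1 by group]
  rw [← mono_one]
  exact mono_congr (fun q => rfl) (fun q => by
    simp only [Equiv.Perm.one_apply, Equiv.Perm.inv_def, Equiv.symm_apply_apply]
    exact inv_mul_cancel₀ (ha q))

/-! ### data of the basic group elements -/

noncomputable def pulse (r : ℕ) {n : ℕ} (i : Fin n) (l : ℤ) : Fin n → ℂ :=
  fun q => if q = i then zeta r ^ l else 1

lemma pulse_ne_zero (r : ℕ) {n : ℕ} (i : Fin n) (l : ℤ) (q : Fin n) : pulse r i l q ≠ 0 := by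
  unfold pulse; split
  · exact zeta_zpow_ne_zero r l
  · exact one_ne_zero

lemma zmat_mono {r n : ℕ} (i : Fin n) (l : ℤ) : zmat r n i l = mono 1 (pulse r i l) := by
  ext p q
  by_cases h : p = q <;>
    simp [zmat, mono, pulse, Matrix.diagonal_apply, h]

lemma smat_mono {n : ℕ} (i j : Fin n) : smat i j = mono (Equiv.swap i j) (fun _ => 1) := rfl

noncomputable def reflData (r : ℕ) {n : ℕ} (i j : Fin n) (l : ℤ) : Fin n → ℂ :=
  fun q => if q = j then zeta r ^ l else if q = i then zeta r ^ (-l) else 1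

lemma reflData_ne_zero (r : ℕ) {n : ℕ} (i j : Fin n) (l : ℤ) (q : Fin n) :
    reflData r i j l q ≠ 0 := by
  unfold reflData; split
  · exact zeta_zpow_ne_zero r l
  · split
    · exact zeta_zpow_ne_zero r _
    · exact one_ne_zero

lemma refl_mono {r n : ℕ} {i j : Fin n} (hij : i ≠ j) (l : ℤ) :
    (reflW r i j l).1 = mono (Equiv.swap i j) (reflData r i j l) := by
  show zmat r n i l * smat i j * zmat r n i (-l) = _
  rw [zmat_mono, zmat_mono, smat_mono, mono_mul, mono_mul]
  refine mono_congr (fun q => by simp) (fun q => ?_)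
  rcases eq_or_ne q j with h | h
  · subst h
    simp [pulse, reflData, Equiv.swap_apply_right, hij, hij.symm]
  · rcases eq_or_ne q i with h2 | h2
    · subst h2
      simp [pulse, reflData, Equiv.swap_apply_left, hij, hij.symm, h]
    · simp [pulse, reflData, Equiv.swap_apply_of_ne_of_ne h2 h, h, h2]

noncomputable def pairData (r : ℕ) {n : ℕ} (i j : Fin n) (l : ℤ) : Fin n → ℂ :=
  fun q => if q = i then zeta r ^ l else if q = j then zeta r ^ (-l) else 1

lemma pairData_ne_zero (r : ℕ) {n : ℕ} (i j : Fin n) (l : ℤ) (q : Fin n) :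
    pairData r i j l q ≠ 0 := by
  unfold pairData; split
  · exact zeta_zpow_ne_zero r l
  · split
    · exact zeta_zpow_ne_zero r _
    · exact one_ne_zero

lemma pair_mono {r n : ℕ} {i j : Fin n} (hij : i ≠ j) (l : ℤ) :
    (pairW r i j l).1 = mono 1 (pairData r i j l) := by
  show zmat r n i l * zmat r n j (-l) = _
  rw [zmat_mono, zmat_mono, mono_mul]
  refine mono_congr (fun q => rfl) (fun q => ?_)
  rcases eq_or_ne q i with h | h
  · subst h
    simp [pulse, pairData, hij]
  · rcases eq_or_ne q j with h2 | h2
    · subst h2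
      simp [pulse, pairData, h]
    · simp [pulse, pairData, h, h2]

lemma sW_mono {r n : ℕ} (i j : Fin n) :
    (sW r i j).1 = mono (Equiv.swap i j) (fun _ => 1) := rfl

/-! ### periodic sums over range r -/

section Periodic

variable {M : Type*} [AddCommMonoid M] {r : ℕ}

lemma per_shift_int (F : ℤ → M) (hF : ∀ l, F (l + r) = F l) :
    ∀ (k : ℤ) (l : ℤ), F (l + r * k) = F l := by
  intro k
  induction k using Int.induction_on with
  | zero => simp
  | succ k ih =>
    intro l
    have h : l + (r : ℤ) * (k + 1) = (l + r * k) + r := by ring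
    rw [h, hF, ih]
  | pred k ih =>
    intro l
    have h : (l + (r : ℤ) * (-(k : ℤ) - 1)) + r = l + r * (-(k : ℤ)) := by ring
    have h2 := hF (l + (r : ℤ) * (-(k : ℤ) - 1))
    rw [h] at h2
    rw [← h2, ih]

lemma per_congr (F : ℤ → M) (hF : ∀ l, F (l + r) = F l) {l l' : ℤ}
    (h : (l : ZMod r) = (l' : ZMod r)) : F l = F l' := by
  rw [ZMod.intCast_eq_intCast_iff] at h
  obtain ⟨k, hk⟩ := h.dvd
  have : l' = l + r * k := by omega
  rw [this, per_shift_int F hF]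

lemma sum_range_zmod [NeZero r] (F : ℤ → M) :
    ∑ l ∈ Finset.range r, F l = ∑ z : ZMod r, F (z.val) := by
  refine Finset.sum_nbij' (i := fun l => (l : ZMod r)) (j := fun z => z.val)
    (fun a _ => Finset.mem_univ _) (fun z _ => Finset.mem_range.2 (ZMod.val_lt z))
    (fun a ha => ZMod.val_cast_of_lt (Finset.mem_range.1 ha))
    (fun z _ => ZMod.natCast_rightInverse z) (fun a ha => ?_)
  show F _ = F _
  rw [ZMod.val_cast_of_lt (Finset.mem_range.1 ha)]

lemma sum_shift (hr : 1 ≤ r) (F : ℤ → M) (hF : ∀ l, F (l + r) = F l) (m : ℤ) :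
    ∑ l ∈ Finset.range r, F (l + m) = ∑ l ∈ Finset.range r, F l := by
  haveI : NeZero r := ⟨by omega⟩
  have h1 : ∑ l ∈ Finset.range r, F ((l : ℤ) + m) = ∑ z : ZMod r, F ((z.val : ℤ) + m) :=
    sum_range_zmod (fun l => F (l + m))
  rw [h1, sum_range_zmod F]
  refine Fintype.sum_equiv (Equiv.addRight (m : ZMod r)) _ _ (fun z => ?_)
  show F _ = F _
  refine per_congr F hF ?_
  push_cast
  rw [ZMod.natCast_rightInverse z, ZMod.natCast_rightInverse]
  rfl

lemma sum_neg (hr : 1 ≤ r) (F : ℤ → M) (hF : ∀ l, F (l + r) = F l) :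
    ∑ l ∈ Finset.range r, F (-l) = ∑ l ∈ Finset.range r, F l := by
  haveI : NeZero r := ⟨by omega⟩
  have h1 : ∑ l ∈ Finset.range r, F (-(l : ℤ)) = ∑ z : ZMod r, F (-(z.val : ℤ)) :=
    sum_range_zmod (fun l => F (-l))
  rw [h1, sum_range_zmod F]
  refine Fintype.sum_equiv (Equiv.neg (ZMod r)) _ _ (fun z => ?_)
  show F _ = F _
  refine per_congr F hF ?_
  push_cast
  rw [ZMod.natCast_rightInverse, ZMod.natCast_rightInverse]
  rfl

end Periodic

section Quot

variable (r n : ℕ) (κ c₀ : ℂ) (c : ℕ → ℂ)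

local notation "𝕋" => cT r n κ c₀ c
local notation "𝕏" => cX r n κ c₀ c
local notation "𝕐" => cY r n κ c₀ c

lemma TT_mul {u w v : GMon r n} (h : u.1 = w.1 * v.1) : 𝕋 u = 𝕋 w * 𝕋 v := by
  have h2 := RingQuot.mkAlgHom_rel ℂ (CRel.t_mul (κ := κ) (c₀ := c₀) (c := c) u w v h)
  rw [map_mul] at h2
  exact h2

lemma TT_mul' {w v u : GMon r n} (h : w.1 * v.1 = u.1) : 𝕋 w * 𝕋 v = 𝕋 u :=
  (TT_mul r n κ c₀ c h.symm).symm

lemma TT_swap {w1 w2 w3 w4 : GMon r n} (h : w1.1 * w2.1 = w3.1 * w4.1) :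
    𝕋 w1 * 𝕋 w2 = 𝕋 w3 * 𝕋 w4 := by
  rw [TT_mul' r n κ c₀ c (u := ⟨w1.1 * w2.1, w1.2.mul w2.2⟩) rfl,
    TT_mul' r n κ c₀ c (u := ⟨w1.1 * w2.1, w1.2.mul w2.2⟩) h.symm]

lemma TT_X_rel (w : GMon r n) (i : Fin n) :
    𝕋 w * 𝕏 i = ∑ j, (w.1⁻¹ i j) • (𝕏 j * 𝕋 w) := by
  have h2 := RingQuot.mkAlgHom_rel ℂ (CRel.t_x (κ := κ) (c₀ := c₀) (c := c) w i)
  rw [map_mul, map_sum] at h2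
  simp only [map_smul, map_mul] at h2
  exact h2

lemma TT_Y_rel (w : GMon r n) (i : Fin n) :
    𝕋 w * 𝕐 i = ∑ j, (w.1 j i) • (𝕐 j * 𝕋 w) := by
  have h2 := RingQuot.mkAlgHom_rel ℂ (CRel.t_y (κ := κ) (c₀ := c₀) (c := c) w i)
  rw [map_mul, map_sum] at h2
  simp only [map_smul, map_mul] at h2
  exact h2

lemma XX_comm (i j : Fin n) : 𝕏 i * 𝕏 j = 𝕏 j * 𝕏 i := by
  have h2 := RingQuot.mkAlgHom_rel ℂ (CRel.xx (r := r) (n := n) (κ := κ) (c₀ := c₀) (c := c) i j)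
  rw [map_mul, map_mul] at h2
  exact h2

lemma YY_comm (i j : Fin n) : 𝕐 i * 𝕐 j = 𝕐 j * 𝕐 i := by
  have h2 := RingQuot.mkAlgHom_rel ℂ (CRel.yy (r := r) (n := n) (κ := κ) (c₀ := c₀) (c := c) i j)
  rw [map_mul, map_mul] at h2
  exact h2

lemma YX_ne (i j : Fin n) (hij : i ≠ j) :
    𝕐 i * 𝕏 j = 𝕏 j * 𝕐 i + c₀ • ∑ l ∈ Finset.range r,
      (zeta r ^ (-(l : ℤ))) • 𝕋 (reflW r i j (l : ℤ)) := by
  have h2 := RingQuot.mkAlgHom_rel ℂ (CRel.yx_ne (r := r) (n := n) (κ := κ) (c₀ := c₀) (c := c) i j hij)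
  rw [map_mul, map_add, map_smul, map_sum] at h2
  simp only [map_smul, map_mul] at h2
  exact h2

lemma TT_X (w : GMon r n) (σ : Equiv.Perm (Fin n)) (a : Fin n → ℂ)
    (hw : w.1 = mono σ a) (ha : ∀ q, a q ≠ 0) (i : Fin n) :
    𝕋 w * 𝕏 i = (a i)⁻¹ • (𝕏 (σ i) * 𝕋 w) := by
  rw [TT_X_rel, hw, mono_inv σ a ha, Finset.sum_eq_single (σ i)]
  · rw [mono_apply, if_pos (by simp), Equiv.Perm.inv_def, Equiv.symm_apply_apply]
  · intro j _ hj
    rw [mono_apply, if_neg, zero_smul]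
    intro hcon
    exact hj (by rw [hcon, Equiv.Perm.inv_def, Equiv.apply_symm_apply])
  · simp

lemma TT_Y (w : GMon r n) (σ : Equiv.Perm (Fin n)) (a : Fin n → ℂ)
    (hw : w.1 = mono σ a) (i : Fin n) :
    𝕋 w * 𝕐 i = a i • (𝕐 (σ i) * 𝕋 w) := by
  rw [TT_Y_rel, hw, Finset.sum_eq_single (σ i)]
  · rw [mono_apply, if_pos rfl]
  · intro j _ hj
    rw [mono_apply, if_neg hj, zero_smul]
  · simp

lemma TT_YX (w : GMon r n) (σ : Equiv.Perm (Fin n)) (a : Fin n → ℂ)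
    (hw : w.1 = mono σ a) (ha : ∀ q, a q ≠ 0) (k : Fin n) :
    𝕋 w * (𝕐 k * 𝕏 k) = (𝕐 (σ k) * 𝕏 (σ k)) * 𝕋 w := by
  calc 𝕋 w * (𝕐 k * 𝕏 k) = (𝕋 w * 𝕐 k) * 𝕏 k := by rw [mul_assoc]
    _ = a k • (𝕐 (σ k) * (𝕋 w * 𝕏 k)) := by
        rw [TT_Y r n κ c₀ c w σ a hw, smul_mul_assoc, mul_assoc]
    _ = a k • (𝕐 (σ k) * ((a k)⁻¹ • (𝕏 (σ k) * 𝕋 w))) := by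
        rw [TT_X r n κ c₀ c w σ a hw ha]
    _ = (a k * (a k)⁻¹) • (𝕐 (σ k) * (𝕏 (σ k) * 𝕋 w)) := by
        rw [mul_smul_comm, smul_smul]
    _ = (𝕐 (σ k) * 𝕏 (σ k)) * 𝕋 w := by
        rw [mul_inv_cancel₀ (ha k), one_smul, mul_assoc]

end Quot

section Elements

variable (r n : ℕ)

lemma zmul {r : ℕ} {a b c d : ℤ} (h : a + b = c + d) :
    zeta r ^ a * zeta r ^ b = zeta r ^ c * zeta r ^ d := by
  rw [← zpow_add₀ (zeta_ne_zero r), ← zpow_add₀ (zeta_ne_zero r), h]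

lemma zmul1 {r : ℕ} {a b c : ℤ} (h : a + b = c) :
    zeta r ^ a * zeta r ^ b = zeta r ^ c := by
  rw [← zpow_add₀ (zeta_ne_zero r), h]

def eps {n : ℕ} (i j x : Fin n) : ℤ := if x = i then 1 else if x = j then -1 else 0

lemma pairData_eq {n : ℕ} {i j : Fin n} (hij : i ≠ j) (a : ℤ) (q : Fin n) :
    pairData r i j a q = zeta r ^ (eps i j q * a) := by
  rcases eq_or_ne q i with h | h
  · subst h; simp [pairData, eps, hij]
  · rcases eq_or_ne q j with h2 | h2
    · subst h2; simp [pairData, eps, h, neg_mul]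
    · simp [pairData, eps, h, h2]

lemma zmat_period {r n : ℕ} (hr : 1 ≤ r) (i : Fin n) (l : ℤ) :
    zmat r n i (l + r) = zmat r n i l := by
  simp only [zmat, zeta_zpow_add_nat hr]

lemma zmat_period' {r n : ℕ} (hr : 1 ≤ r) (i : Fin n) (l : ℤ) :
    zmat r n i (l - r) = zmat r n i l := by
  have h2 := zmat_period (n := n) hr i (l - r)
  rw [sub_add_cancel] at h2
  exact h2.symm

lemma reflW_period {r n : ℕ} (hr : 1 ≤ r) (i j : Fin n) (l : ℤ) :
    reflW r i j (l + r) = reflW r i j l := by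
  apply Subtype.ext
  show zmat r n i (l + r) * smat i j * zmat r n i (-(l + r)) = _
  rw [zmat_period hr, show -(l + (r : ℤ)) = -l - r by ring, zmat_period' hr]
  rfl

lemma pairW_period {r n : ℕ} (hr : 1 ≤ r) (i j : Fin n) (l : ℤ) :
    pairW r i j (l + r) = pairW r i j l := by
  apply Subtype.ext
  show zmat r n i (l + r) * zmat r n j (-(l + r)) = _
  rw [zmat_period hr, show -(l + (r : ℤ)) = -l - r by ring, zmat_period' hr]
  rfl

lemma refl_symm {r n : ℕ} {i j : Fin n} (hij : i ≠ j) (l : ℤ) :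
    reflW r i j l = reflW r j i (-l) := by
  apply Subtype.ext
  rw [refl_mono hij, refl_mono hij.symm]
  refine mono_congr (fun x => by rw [Equiv.swap_comm]) (fun x => ?_)
  rcases eq_or_ne x j with h | h
  · rw [h]; simp [reflData, hij.symm, neg_neg]
  · rcases eq_or_ne x i with h2 | h2
    · rw [h2]; simp [reflData, hij, hij.symm]
    · simp [reflData, h, h2]

lemma refl_mul_s1 {r n : ℕ} {i j : Fin n} (hij : i ≠ j) (l : ℤ) :
    (reflW r j i l).1 * (sW r i j).1 = (pairW r i j (-l)).1 := by
  rw [refl_mono hij.symm, sW_mono, pair_mono hij, mono_mul]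
  refine mono_congr (fun x => ?_) (fun x => ?_)
  · simp [Equiv.Perm.mul_apply, Equiv.swap_comm j i, Equiv.swap_apply_self]
  · rcases eq_or_ne x i with h | h
    · subst h; simp [reflData, pairData, Equiv.swap_apply_left, hij, hij.symm]
    · rcases eq_or_ne x j with h2 | h2
      · subst h2; simp [reflData, pairData, Equiv.swap_apply_right, h, neg_neg]
      · simp [reflData, pairData, Equiv.swap_apply_of_ne_of_ne h h2, h, h2]

lemma refl_mul_s2 {r n : ℕ} {i j : Fin n} (hij : i ≠ j) (l : ℤ) :
    (reflW r i j l).1 * (sW r i j).1 = (pairW r i j l).1 := by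
  rw [refl_mono hij, sW_mono, pair_mono hij, mono_mul]
  refine mono_congr (fun x => ?_) (fun x => ?_)
  · simp [Equiv.Perm.mul_apply, Equiv.swap_apply_self]
  · rcases eq_or_ne x i with h | h
    · subst h; simp [reflData, pairData, Equiv.swap_apply_left, hij, hij.symm]
    · rcases eq_or_ne x j with h2 | h2
      · subst h2; simp [reflData, pairData, Equiv.swap_apply_right, h, hij, hij.symm, zpow_neg]
      · simp [reflData, pairData, Equiv.swap_apply_of_ne_of_ne h h2, h, h2]

lemma s_conj_refl {r n : ℕ} {i j p q : Fin n} (hij : i ≠ j) (hpq : p ≠ q) (l : ℤ) :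
    (sW r i j).1 * (reflW r p q l).1
      = (reflW r (Equiv.swap i j p) (Equiv.swap i j q) l).1 * (sW r i j).1 := by
  rw [sW_mono, refl_mono hpq, refl_mono (fun h => hpq ((Equiv.swap i j).injective h)),
    mono_mul, mono_mul]
  refine mono_congr (fun x => ?_) (fun x => ?_)
  · rw [Equiv.mul_swap_eq_swap_mul]
  · simp only [reflData, Equiv.apply_eq_iff_eq, one_mul, mul_one]

end Elements

section Elements2

lemma reflData_at_j {r n : ℕ} (i j : Fin n) (l : ℤ) : reflData r i j l j = zeta r ^ l := by
  simp [reflData]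

lemma reflData_at_i {r n : ℕ} {i j : Fin n} (hij : i ≠ j) (l : ℤ) :
    reflData r i j l i = zeta r ^ (-l) := by
  simp [reflData, hij]

lemma reflData_at_other {r n : ℕ} {i j q : Fin n} (hqj : q ≠ j) (hqi : q ≠ i) (l : ℤ) :
    reflData r i j l q = 1 := by
  simp [reflData, hqj, hqi]

lemma pair_conj_refl {r n : ℕ} {i j k q : Fin n} (hij : i ≠ j) (hkq : k ≠ q) (a l : ℤ) :
    (pairW r i j a).1 * (reflW r k q l).1
      = (reflW r k q (l + (eps i j k - eps i j q) * a)).1 * (pairW r i j a).1 := by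
  rw [pair_mono hij, refl_mono hkq, refl_mono hkq, mono_mul, mono_mul]
  refine mono_congr (fun x => by simp) (fun x => ?_)
  simp only [Equiv.Perm.one_apply]
  rw [pairData_eq r hij, pairData_eq r hij]
  rcases eq_or_ne x q with h | h
  · rw [h, Equiv.swap_apply_right, reflData_at_j, reflData_at_j]
    exact zmul (by ring)
  · rcases eq_or_ne x k with h2 | h2
    · rw [h2, Equiv.swap_apply_left, reflData_at_i hkq, reflData_at_i hkq]
      exact zmul (by ring)
    · rw [Equiv.swap_apply_of_ne_of_ne h2 h, reflData_at_other h h2,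
        reflData_at_other h h2, one_mul, mul_one]

lemma refl_refl_disj {r n : ℕ} {p q u v : Fin n} (hpq : p ≠ q) (huv : u ≠ v)
    (hpu : p ≠ u) (hpv : p ≠ v) (hqu : q ≠ u) (hqv : q ≠ v) (l m : ℤ) :
    (reflW r p q l).1 * (reflW r u v m).1 = (reflW r u v m).1 * (reflW r p q l).1 := by
  rw [refl_mono hpq, refl_mono huv, mono_mul, mono_mul]
  refine mono_congr (fun x => ?_) (fun x => ?_)
  · simp only [Equiv.Perm.mul_apply, Equiv.swap_apply_def]
    split_ifs <;> simp_all
  · simp only [reflData, Equiv.swap_apply_def]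
    split_ifs <;> simp_all <;> ring

lemma refl_refl_I1 {r n : ℕ} {i j k : Fin n} (hik : i ≠ k) (hjk : j ≠ k) (hji : j ≠ i)
    (l l' : ℤ) :
    (reflW r i k l).1 * (reflW r j k l').1
      = (reflW r j i (l' - l)).1 * (reflW r i k l).1 := by
  rw [refl_mono hik, refl_mono hjk, refl_mono hji, mono_mul, mono_mul]
  refine mono_congr (fun x => ?_) (fun x => ?_)
  · simp only [Equiv.Perm.mul_apply, Equiv.swap_apply_def]
    split_ifs <;> simp_all
  · rcases eq_or_ne x k with h1 | h1
    · rw [h1, Equiv.swap_apply_right, Equiv.swap_apply_right,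
        reflData_at_other hjk hji, reflData_at_j, reflData_at_j, reflData_at_j, one_mul]
      exact (zmul1 (by ring)).symm
    · rcases eq_or_ne x j with h2 | h2
      · rw [h2, Equiv.swap_apply_left, Equiv.swap_apply_of_ne_of_ne hji hjk,
          reflData_at_j, reflData_at_i hjk, reflData_at_i hji,
          reflData_at_other hjk hji, mul_one]
        exact zmul1 (by ring)
      · rcases eq_or_ne x i with h3 | h3
        · rw [h3, Equiv.swap_apply_of_ne_of_ne hji.symm hik,
            Equiv.swap_apply_left, reflData_at_i hik,
            reflData_at_other hik hji.symm, reflData_at_other hik.symm hjk.symm,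
            mul_one, one_mul]
        · rw [Equiv.swap_apply_of_ne_of_ne h2 h1, Equiv.swap_apply_of_ne_of_ne h3 h1,
            reflData_at_other h1 h3, reflData_at_other h1 h2,
            reflData_at_other h3 h2]

lemma refl_refl_I4 {r n : ℕ} {i j k : Fin n} (hik : i ≠ k) (hjk : j ≠ k) (hji : j ≠ i)
    (l l' : ℤ) :
    (reflW r i k l).1 * (reflW r j i l').1
      = (reflW r j k (l' + l)).1 * (reflW r i k l).1 := by
  rw [refl_mono hik, refl_mono hji, refl_mono hjk, mono_mul, mono_mul]
  refine mono_congr (fun x => ?_) (fun x => ?_)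
  · simp only [Equiv.Perm.mul_apply, Equiv.swap_apply_def]
    split_ifs <;> simp_all
  · rcases eq_or_ne x i with h1 | h1
    · rw [h1, Equiv.swap_apply_right, Equiv.swap_apply_left,
        reflData_at_other hjk hji, reflData_at_j, reflData_at_j, reflData_at_i hik,
        one_mul]
      exact (zmul1 (by ring)).symm
    · rcases eq_or_ne x j with h2 | h2
      · rw [h2, Equiv.swap_apply_left, Equiv.swap_apply_of_ne_of_ne hji hjk,
          reflData_at_i hik, reflData_at_i hji, reflData_at_i hjk,
          reflData_at_other hjk hji, mul_one]
        exact zmul1 (by ring)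
      · rcases eq_or_ne x k with h3 | h3
        · rw [h3, Equiv.swap_apply_of_ne_of_ne hjk.symm hik.symm,
            Equiv.swap_apply_right, reflData_at_j,
            reflData_at_other hik.symm hjk.symm, reflData_at_other hik hji.symm,
            mul_one, one_mul]
        · rw [Equiv.swap_apply_of_ne_of_ne h2 h1, Equiv.swap_apply_of_ne_of_ne h1 h3,
            reflData_at_other h3 h1, reflData_at_other h1 h2,
            reflData_at_other h3 h2]

end Elements2

section Derived

variable (r n : ℕ) (κ c₀ : ℂ) (c : ℕ → ℂ)

local notation "𝕋" => cT r n κ c₀ c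
local notation "𝕏" => cX r n κ c₀ c
local notation "𝕐" => cY r n κ c₀ c
local notation "Φ" => cPhi r n κ c₀ c
local notation "ZZ" => cz r n κ c₀ c

lemma sum_Trefl_shift (hr : 1 ≤ r) (p q : Fin n) (m : ℤ) :
    ∑ l ∈ Finset.range r, 𝕋 (reflW r p q ((l : ℤ) + m))
      = ∑ l ∈ Finset.range r, 𝕋 (reflW r p q (l : ℤ)) :=
  sum_shift hr (fun l => 𝕋 (reflW r p q l)) (fun l => by show 𝕋 _ = 𝕋 _; rw [reflW_period hr]) m

lemma sum_Trefl_neg (hr : 1 ≤ r) (p q : Fin n) :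
    ∑ l ∈ Finset.range r, 𝕋 (reflW r p q (-(l : ℤ)))
      = ∑ l ∈ Finset.range r, 𝕋 (reflW r p q (l : ℤ)) :=
  sum_neg hr (fun l => 𝕋 (reflW r p q l)) (fun l => by show 𝕋 _ = 𝕋 _; rw [reflW_period hr])

lemma sum_Tpair_neg (hr : 1 ≤ r) (p q : Fin n) :
    ∑ l ∈ Finset.range r, 𝕋 (pairW r p q (-(l : ℤ)))
      = ∑ l ∈ Finset.range r, 𝕋 (pairW r p q (l : ℤ)) :=
  sum_neg hr (fun l => 𝕋 (pairW r p q l)) (fun l => by show 𝕋 _ = 𝕋 _; rw [pairW_period hr])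

lemma Tpair_comm_YX {i j : Fin n} (hij : i ≠ j) (a : ℤ) (k : Fin n) :
    𝕋 (pairW r i j a) * (𝕐 k * 𝕏 k) = (𝕐 k * 𝕏 k) * 𝕋 (pairW r i j a) := by
  have h2 := TT_YX r n κ c₀ c (pairW r i j a) 1 (pairData r i j a) (pair_mono hij a)
    (pairData_ne_zero r i j a) k
  simpa using h2

lemma Trefl_comm_YX {p q k : Fin n} (hpq : p ≠ q) (hkp : k ≠ p) (hkq : k ≠ q) (l : ℤ) :
    𝕋 (reflW r p q l) * (𝕐 k * 𝕏 k) = (𝕐 k * 𝕏 k) * 𝕋 (reflW r p q l) := by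
  have h2 := TT_YX r n κ c₀ c (reflW r p q l) (Equiv.swap p q) (reflData r p q l)
    (refl_mono hpq l) (reflData_ne_zero r p q l) k
  rwa [Equiv.swap_apply_of_ne_of_ne hkp hkq] at h2

lemma Trefl_YX_swap {p q : Fin n} (hpq : p ≠ q) (l : ℤ) :
    𝕋 (reflW r p q l) * (𝕐 q * 𝕏 q) = (𝕐 p * 𝕏 p) * 𝕋 (reflW r p q l) := by
  have h2 := TT_YX r n κ c₀ c (reflW r p q l) (Equiv.swap p q) (reflData r p q l)
    (refl_mono hpq l) (reflData_ne_zero r p q l) q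
  rwa [Equiv.swap_apply_right] at h2

lemma Tpair_comm_Phi (hr : 1 ≤ r) {i j : Fin n} (hij : i ≠ j) (a : ℤ) (k : Fin n) :
    𝕋 (pairW r i j a) * Φ k = Φ k * 𝕋 (pairW r i j a) := by
  unfold cPhi
  rw [Finset.mul_sum, Finset.sum_mul]
  refine Finset.sum_congr rfl (fun q hq => ?_)
  have hkq : k ≠ q := ((Finset.mem_filter.1 hq).2).ne'
  rw [Finset.mul_sum, Finset.sum_mul]
  have key : ∀ l : ℤ, 𝕋 (pairW r i j a) * 𝕋 (reflW r k q l)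
      = 𝕋 (reflW r k q (l + (eps i j k - eps i j q) * a)) * 𝕋 (pairW r i j a) :=
    fun l => TT_swap r n κ c₀ c (pair_conj_refl hij hkq a l)
  calc ∑ l ∈ Finset.range r, 𝕋 (pairW r i j a) * 𝕋 (reflW r k q (l : ℤ))
      = ∑ l ∈ Finset.range r,
          𝕋 (reflW r k q ((l : ℤ) + (eps i j k - eps i j q) * a)) * 𝕋 (pairW r i j a) := by
        exact Finset.sum_congr rfl (fun l _ => key l)
    _ = (∑ l ∈ Finset.range r, 𝕋 (reflW r k q ((l : ℤ) + (eps i j k - eps i j q) * a)))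
          * 𝕋 (pairW r i j a) := by rw [Finset.sum_mul]
    _ = (∑ l ∈ Finset.range r, 𝕋 (reflW r k q (l : ℤ))) * 𝕋 (pairW r i j a) := by
        rw [sum_Trefl_shift r n κ c₀ c hr]
    _ = ∑ l ∈ Finset.range r, 𝕋 (reflW r k q (l : ℤ)) * 𝕋 (pairW r i j a) := by
        rw [Finset.sum_mul]

lemma Tpair_comm_z (hr : 1 ≤ r) {i j : Fin n} (hij : i ≠ j) (a : ℤ) (k : Fin n) :
    𝕋 (pairW r i j a) * ZZ k = ZZ k * 𝕋 (pairW r i j a) := by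
  unfold cz
  rw [mul_add, add_mul, Tpair_comm_YX r n κ c₀ c hij a k, mul_smul_comm, smul_mul_assoc,
    Tpair_comm_Phi r n κ c₀ c hr hij a k]

lemma Pi_comm_z (hr : 1 ≤ r) {i j : Fin n} (hij : i ≠ j) (k : Fin n) :
    cPi r n κ c₀ c i j * ZZ k = ZZ k * cPi r n κ c₀ c i j := by
  unfold cPi
  rw [Finset.sum_mul, Finset.mul_sum]
  exact Finset.sum_congr rfl (fun a _ => Tpair_comm_z r n κ c₀ c hr hij _ k)

lemma ts_YX {i j : Fin n} (k : Fin n) :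
    𝕋 (sW r i j) * (𝕐 k * 𝕏 k)
      = (𝕐 (Equiv.swap i j k) * 𝕏 (Equiv.swap i j k)) * 𝕋 (sW r i j) :=
  TT_YX r n κ c₀ c (sW r i j) (Equiv.swap i j) (fun _ => 1) rfl (fun _ => one_ne_zero) k

lemma ts_refl {i j p q : Fin n} (hij : i ≠ j) (hpq : p ≠ q) (l : ℤ) :
    𝕋 (sW r i j) * 𝕋 (reflW r p q l)
      = 𝕋 (reflW r (Equiv.swap i j p) (Equiv.swap i j q) l) * 𝕋 (sW r i j) :=
  TT_swap r n κ c₀ c (s_conj_refl hij hpq l)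

end Derived

section TsZ

variable (r n : ℕ) (κ c₀ : ℂ) (c : ℕ → ℂ)

local notation "𝕋" => cT r n κ c₀ c
local notation "𝕏" => cX r n κ c₀ c
local notation "𝕐" => cY r n κ c₀ c
local notation "Φ" => cPhi r n κ c₀ c
local notation "ZZ" => cz r n κ c₀ c

variable {i i' : Fin n}

lemma filter_lt_succ (h : (i' : ℕ) = (i : ℕ) + 1) :
    Finset.univ.filter (fun q : Fin n => q < i')
      = insert i (Finset.univ.filter (fun q : Fin n => q < i)) := by
  ext q
  simp only [Finset.mem_filter, Finset.mem_insert, Finset.mem_univ, true_and, Fin.lt_def,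
    Fin.ext_iff]
  omega

lemma ts_Phi_i (hr : 1 ≤ r) (h : (i' : ℕ) = (i : ℕ) + 1) :
    𝕋 (sW r i i') * Φ i
      = Φ i' * 𝕋 (sW r i i') - (∑ l ∈ Finset.range r, 𝕋 (pairW r i i' (l : ℤ))) := by
  have hii' : i ≠ i' := fun e => by rw [e] at h; omega
  have step1 : 𝕋 (sW r i i') * Φ i
      = (∑ q ∈ Finset.univ.filter (fun q : Fin n => q < i), ∑ l ∈ Finset.range r,
          𝕋 (reflW r i' q (l : ℤ))) * 𝕋 (sW r i i') := by
    unfold cPhi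
    rw [Finset.mul_sum, Finset.sum_mul]
    refine Finset.sum_congr rfl (fun q hq => ?_)
    have hqlt : q < i := (Finset.mem_filter.1 hq).2
    have hq2 : q ≠ i' := by
      intro e2; rw [e2, Fin.lt_def] at hqlt; omega
    rw [Finset.mul_sum, Finset.sum_mul]
    refine Finset.sum_congr rfl (fun l _ => ?_)
    have e := ts_refl r n κ c₀ c hii' (p := i) (q := q) hqlt.ne' (l : ℤ)
    rwa [Equiv.swap_apply_left, Equiv.swap_apply_of_ne_of_ne hqlt.ne hq2] at e
  have step2 : Φ i' = (∑ l ∈ Finset.range r, 𝕋 (reflW r i' i (l : ℤ)))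
      + ∑ q ∈ Finset.univ.filter (fun q : Fin n => q < i), ∑ l ∈ Finset.range r,
          𝕋 (reflW r i' q (l : ℤ)) := by
    show cPhi r n κ c₀ c i' = _
    unfold cPhi
    rw [filter_lt_succ (n := n) h, Finset.sum_insert (by simp)]
  have step3 : (∑ l ∈ Finset.range r, 𝕋 (reflW r i' i (l : ℤ))) * 𝕋 (sW r i i')
      = ∑ l ∈ Finset.range r, 𝕋 (pairW r i i' (l : ℤ)) := by
    rw [Finset.sum_mul, ← sum_Tpair_neg r n κ c₀ c hr i i']
    exact Finset.sum_congr rfl (fun l _ => TT_mul' r n κ c₀ c (refl_mul_s1 hii' (l : ℤ)))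
  have e2 : (∑ q ∈ Finset.univ.filter (fun q : Fin n => q < i), ∑ l ∈ Finset.range r,
      𝕋 (reflW r i' q (l : ℤ)))
      = Φ i' - ∑ l ∈ Finset.range r, 𝕋 (reflW r i' i (l : ℤ)) := by
    rw [step2]; abel
  rw [step1, e2, sub_mul, step3]

lemma ts_Phi_i' (hr : 1 ≤ r) (h : (i' : ℕ) = (i : ℕ) + 1) :
    𝕋 (sW r i i') * Φ i'
      = Φ i * 𝕋 (sW r i i') + (∑ l ∈ Finset.range r, 𝕋 (pairW r i i' (l : ℤ))) := by
  have hii' : i ≠ i' := fun e => by rw [e] at h; omega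
  show 𝕋 (sW r i i') * cPhi r n κ c₀ c i' = _
  unfold cPhi
  rw [filter_lt_succ (n := n) h, Finset.sum_insert (by simp), mul_add]
  have part1 : 𝕋 (sW r i i') * (∑ l ∈ Finset.range r, 𝕋 (reflW r i' i (l : ℤ)))
      = ∑ l ∈ Finset.range r, 𝕋 (pairW r i i' (l : ℤ)) := by
    rw [Finset.mul_sum]
    refine Finset.sum_congr rfl (fun l _ => ?_)
    have e := ts_refl r n κ c₀ c hii' (p := i') (q := i) hii'.symm (l : ℤ)
    rw [Equiv.swap_apply_left, Equiv.swap_apply_right] at e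
    rw [e, TT_mul' r n κ c₀ c (refl_mul_s2 hii' (l : ℤ))]
  have part2 : 𝕋 (sW r i i') * (∑ q ∈ Finset.univ.filter (fun q : Fin n => q < i),
        ∑ l ∈ Finset.range r, 𝕋 (reflW r i' q (l : ℤ)))
      = Φ i * 𝕋 (sW r i i') := by
    unfold cPhi
    rw [Finset.mul_sum, Finset.sum_mul]
    refine Finset.sum_congr rfl (fun q hq => ?_)
    have hqlt : q < i := (Finset.mem_filter.1 hq).2
    have hq2 : q ≠ i' := by
      intro e2; rw [e2, Fin.lt_def] at hqlt; omega
    rw [Finset.mul_sum, Finset.sum_mul]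
    refine Finset.sum_congr rfl (fun l _ => ?_)
    have e := ts_refl r n κ c₀ c hii' (p := i') (q := q) hq2.symm (l : ℤ)
    rwa [Equiv.swap_apply_right, Equiv.swap_apply_of_ne_of_ne hqlt.ne hq2] at e
  rw [part1, part2]
  abel

lemma ts_Phi_other (hr : 1 ≤ r) (h : (i' : ℕ) = (i : ℕ) + 1) {k : Fin n}
    (hk1 : k ≠ i) (hk2 : k ≠ i') :
    𝕋 (sW r i i') * Φ k = Φ k * 𝕋 (sW r i i') := by
  have hii' : i ≠ i' := fun e => by rw [e] at h; omega
  unfold cPhi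
  rw [Finset.mul_sum, Finset.sum_mul]
  have step1 : ∀ q ∈ Finset.univ.filter (fun q : Fin n => q < k),
      𝕋 (sW r i i') * (∑ l ∈ Finset.range r, 𝕋 (reflW r k q (l : ℤ)))
        = (∑ l ∈ Finset.range r, 𝕋 (reflW r k (Equiv.swap i i' q) (l : ℤ)))
            * 𝕋 (sW r i i') := by
    intro q hq
    have hqk : k ≠ q := ((Finset.mem_filter.1 hq).2).ne'
    rw [Finset.mul_sum, Finset.sum_mul]
    refine Finset.sum_congr rfl (fun l _ => ?_)
    have e := ts_refl r n κ c₀ c hii' (p := k) (q := q) hqk (l : ℤ)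
    rwa [Equiv.swap_apply_of_ne_of_ne hk1 hk2] at e
  rw [Finset.sum_congr rfl step1]
  refine Finset.sum_equiv (Equiv.swap i i') (fun q => ?_) (fun q _ => rfl)
  simp only [Finset.mem_filter, Finset.mem_univ, true_and, Fin.lt_def]
  have hk1' : (k : ℕ) ≠ (i : ℕ) := fun e => hk1 (Fin.ext e)
  have hk2' : (k : ℕ) ≠ (i' : ℕ) := fun e => hk2 (Fin.ext e)
  rcases eq_or_ne q i with e | e
  · rw [e, Equiv.swap_apply_left]; omega
  · rcases eq_or_ne q i' with e2 | e2
    · rw [e2, Equiv.swap_apply_right]; omega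
    · rw [Equiv.swap_apply_of_ne_of_ne e e2]

lemma ts_z_i (hr : 1 ≤ r) (h : (i' : ℕ) = (i : ℕ) + 1) :
    𝕋 (sW r i i') * ZZ i = ZZ i' * 𝕋 (sW r i i') - c₀ • cPi r n κ c₀ c i i' := by
  have hYX := ts_YX r n κ c₀ c (i := i) (j := i') i
  rw [Equiv.swap_apply_left] at hYX
  unfold cz cPi
  rw [mul_add, mul_smul_comm, ts_Phi_i r n κ c₀ c hr h, hYX, add_mul, smul_mul_assoc,
    smul_sub]
  abel

lemma ts_z_i' (hr : 1 ≤ r) (h : (i' : ℕ) = (i : ℕ) + 1) :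
    𝕋 (sW r i i') * ZZ i' = ZZ i * 𝕋 (sW r i i') + c₀ • cPi r n κ c₀ c i i' := by
  have hYX := ts_YX r n κ c₀ c (i := i) (j := i') i'
  rw [Equiv.swap_apply_right] at hYX
  unfold cz cPi
  rw [mul_add, mul_smul_comm, ts_Phi_i' r n κ c₀ c hr h, hYX, add_mul, smul_mul_assoc,
    smul_add]
  abel

lemma ts_z_other (hr : 1 ≤ r) (h : (i' : ℕ) = (i : ℕ) + 1) {k : Fin n}
    (hk1 : k ≠ i) (hk2 : k ≠ i') :
    𝕋 (sW r i i') * ZZ k = ZZ k * 𝕋 (sW r i i') := by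
  have hYX := ts_YX r n κ c₀ c (i := i) (j := i') k
  rw [Equiv.swap_apply_of_ne_of_ne hk1 hk2] at hYX
  unfold cz
  rw [mul_add, mul_smul_comm, ts_Phi_other r n κ c₀ c hr h hk1 hk2, hYX, add_mul,
    smul_mul_assoc]

end TsZ

section ZComm

variable (r n : ℕ) (κ c₀ : ℂ) (c : ℕ → ℂ)

local notation "𝕋" => cT r n κ c₀ c
local notation "𝕏" => cX r n κ c₀ c
local notation "𝕐" => cY r n κ c₀ c
local notation "Φ" => cPhi r n κ c₀ c
local notation "ZZ" => cz r n κ c₀ c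

lemma Phi_expand (b : Fin n) : Φ b = ∑ q ∈ Finset.univ.filter (fun q : Fin n => q < b),
    ∑ l ∈ Finset.range r, 𝕋 (reflW r b q (l : ℤ)) := rfl

lemma Trefl_comm_Phi (hr : 1 ≤ r) {a b k : Fin n} (hka : k < a) (hab : a < b) (l : ℤ) :
    𝕋 (reflW r a k l) * Φ b = Φ b * 𝕋 (reflW r a k l) := by
  have hak : a ≠ k := hka.ne'
  have hba : b ≠ a := hab.ne'
  have hbk : b ≠ k := (hka.trans hab).ne'
  have hamem : a ∈ Finset.univ.filter (fun q : Fin n => q < b) := by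
    simp [Finset.mem_filter, hab]
  have hkmem : k ∈ (Finset.univ.filter (fun q : Fin n => q < b)).erase a := by
    simp [Finset.mem_erase, Finset.mem_filter, hka.ne, hka.trans hab]
  rw [Phi_expand,
    ← Finset.sum_erase_add _ _ hamem, ← Finset.sum_erase_add _ _ hkmem]
  rw [mul_add, mul_add, add_mul, add_mul]
  have hrest : 𝕋 (reflW r a k l) *
      (∑ q ∈ ((Finset.univ.filter (fun q : Fin n => q < b)).erase a).erase k,
        ∑ l' ∈ Finset.range r, 𝕋 (reflW r b q (l' : ℤ)))
      = (∑ q ∈ ((Finset.univ.filter (fun q : Fin n => q < b)).erase a).erase k,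
        ∑ l' ∈ Finset.range r, 𝕋 (reflW r b q (l' : ℤ))) * 𝕋 (reflW r a k l) := by
    rw [Finset.mul_sum, Finset.sum_mul]
    refine Finset.sum_congr rfl (fun q hq => ?_)
    have hq1 : q ≠ k := (Finset.mem_erase.1 hq).1
    have hq2 : q ≠ a := (Finset.mem_erase.1 (Finset.mem_erase.1 hq).2).1
    have hq3 : q < b := (Finset.mem_filter.1 (Finset.mem_erase.1 (Finset.mem_erase.1 hq).2).2).2
    rw [Finset.mul_sum, Finset.sum_mul]
    refine Finset.sum_congr rfl (fun l' _ => ?_)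
    exact TT_swap r n κ c₀ c
      (refl_refl_disj hak hq3.ne' hab.ne hq2.symm (fun e => hbk e.symm) hq1.symm l (l' : ℤ))
  have hkpart : 𝕋 (reflW r a k l) * (∑ l' ∈ Finset.range r, 𝕋 (reflW r b k (l' : ℤ)))
      = (∑ l' ∈ Finset.range r, 𝕋 (reflW r b a (l' : ℤ))) * 𝕋 (reflW r a k l) := by
    rw [Finset.mul_sum, Finset.sum_mul]
    have step : ∀ l' ∈ Finset.range r, 𝕋 (reflW r a k l) * 𝕋 (reflW r b k (l' : ℤ))
        = 𝕋 (reflW r b a ((l' : ℤ) + (-l))) * 𝕋 (reflW r a k l) := by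
      intro l' _
      have e := TT_swap r n κ c₀ c (refl_refl_I1 hak hbk hba l (l' : ℤ))
      rwa [show (l' : ℤ) - l = (l' : ℤ) + (-l) by ring] at e
    rw [Finset.sum_congr rfl step, ← Finset.sum_mul, ← Finset.sum_mul,
      sum_Trefl_shift r n κ c₀ c hr b a (-l)]
  have hapart : 𝕋 (reflW r a k l) * (∑ l' ∈ Finset.range r, 𝕋 (reflW r b a (l' : ℤ)))
      = (∑ l' ∈ Finset.range r, 𝕋 (reflW r b k (l' : ℤ))) * 𝕋 (reflW r a k l) := by
    rw [Finset.mul_sum, Finset.sum_mul]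
    have step : ∀ l' ∈ Finset.range r, 𝕋 (reflW r a k l) * 𝕋 (reflW r b a (l' : ℤ))
        = 𝕋 (reflW r b k ((l' : ℤ) + l)) * 𝕋 (reflW r a k l) := by
      intro l' _
      exact TT_swap r n κ c₀ c (refl_refl_I4 hak hbk hba l (l' : ℤ))
    rw [Finset.sum_congr rfl step, ← Finset.sum_mul, ← Finset.sum_mul,
      sum_Trefl_shift r n κ c₀ c hr b k l]
  rw [hrest, hkpart, hapart]
  abel

lemma Phi_comm_Phi (hr : 1 ≤ r) {a b : Fin n} (hab : a < b) : Φ a * Φ b = Φ b * Φ a := by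
  rw [Phi_expand r n κ c₀ c a, Finset.sum_mul, Finset.mul_sum]
  refine Finset.sum_congr rfl (fun k hk => ?_)
  have hka : k < a := (Finset.mem_filter.1 hk).2
  rw [Finset.sum_mul, Finset.mul_sum]
  exact Finset.sum_congr rfl (fun l _ => Trefl_comm_Phi r n κ c₀ c hr hka hab (l : ℤ))

lemma Phi_comm_YX {a b : Fin n} (hab : a < b) :
    Φ a * (𝕐 b * 𝕏 b) = (𝕐 b * 𝕏 b) * Φ a := by
  rw [Phi_expand r n κ c₀ c a, Finset.sum_mul, Finset.mul_sum]
  refine Finset.sum_congr rfl (fun k hk => ?_)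
  have hka : k < a := (Finset.mem_filter.1 hk).2
  rw [Finset.sum_mul, Finset.mul_sum]
  refine Finset.sum_congr rfl (fun l _ => ?_)
  exact Trefl_comm_YX r n κ c₀ c hka.ne' hab.ne' (fun e => ((hka.trans hab).ne' e).elim)
    (l : ℤ)

lemma z_comm_lt (hr : 1 ≤ r) {a b : Fin n} (hab : a < b) : ZZ a * ZZ b = ZZ b * ZZ a := by
  have hba : b ≠ a := hab.ne'
  have hamem : a ∈ Finset.univ.filter (fun q : Fin n => q < b) := by
    simp [Finset.mem_filter, hab]
  -- abbreviations
  set A := 𝕐 a * 𝕏 a with hA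
  set C := 𝕐 b * 𝕏 b with hC
  set T := ∑ l ∈ Finset.range r, 𝕋 (reflW r b a (l : ℤ)) with hT
  set R := ∑ q ∈ (Finset.univ.filter (fun q : Fin n => q < b)).erase a,
    (A * ∑ l ∈ Finset.range r, 𝕋 (reflW r b q (l : ℤ))) with hR
  -- commuting T with A-type factors
  have hinner : T * A = C * T := by
    rw [hT, Finset.sum_mul, Finset.mul_sum]
    exact Finset.sum_congr rfl (fun l _ => Trefl_YX_swap r n κ c₀ c hba (l : ℤ))
  have hrestcomm : ∀ q ∈ (Finset.univ.filter (fun q : Fin n => q < b)).erase a,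
      (∑ l ∈ Finset.range r, 𝕋 (reflW r b q (l : ℤ))) * A
        = A * ∑ l ∈ Finset.range r, 𝕋 (reflW r b q (l : ℤ)) := by
    intro q hq
    have hq1 : q ≠ a := (Finset.mem_erase.1 hq).1
    have hq2 : q < b := (Finset.mem_filter.1 (Finset.mem_erase.1 hq).2).2
    rw [Finset.sum_mul, Finset.mul_sum]
    exact Finset.sum_congr rfl (fun l _ =>
      Trefl_comm_YX r n κ c₀ c hq2.ne' hab.ne (Ne.symm hq1) (l : ℤ))
  have eAD : A * Φ b = R + A * T := by
    rw [Phi_expand r n κ c₀ c b, ← Finset.sum_erase_add _ _ hamem, mul_add, Finset.mul_sum]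
  have eDA : Φ b * A = R + C * T := by
    rw [Phi_expand r n κ c₀ c b, ← Finset.sum_erase_add _ _ hamem, add_mul, hinner,
      Finset.sum_mul, hR]
    congr 1
    exact Finset.sum_congr rfl hrestcomm
  -- S-sum computation
  have hS : 𝕐 a * ((∑ l ∈ Finset.range r, (zeta r ^ (-(l : ℤ))) • 𝕋 (reflW r b a (l : ℤ))) * 𝕏 b)
      = A * T := by
    rw [Finset.sum_mul, Finset.mul_sum, hT, Finset.mul_sum]
    refine Finset.sum_congr rfl (fun l _ => ?_)
    have hX : 𝕋 (reflW r b a (l : ℤ)) * 𝕏 b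
        = (zeta r ^ (l : ℤ)) • (𝕏 a * 𝕋 (reflW r b a (l : ℤ))) := by
      have e := TT_X r n κ c₀ c (reflW r b a (l : ℤ)) (Equiv.swap b a) (reflData r b a (l : ℤ))
        (refl_mono hba (l : ℤ)) (reflData_ne_zero r b a (l : ℤ)) b
      rw [Equiv.swap_apply_left, reflData_at_i hba] at e
      rw [e, ← zpow_neg, neg_neg]
    rw [smul_mul_assoc, hX, smul_smul, zmul1 (show -(l : ℤ) + l = 0 by ring), zpow_zero,
      one_smul, ← mul_assoc, hA]
  have hS' : 𝕐 b * ((∑ l ∈ Finset.range r, (zeta r ^ (-(l : ℤ))) • 𝕋 (reflW r a b (l : ℤ))) * 𝕏 a)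
      = C * (∑ l ∈ Finset.range r, 𝕋 (reflW r a b (l : ℤ))) := by
    rw [Finset.sum_mul, Finset.mul_sum, Finset.mul_sum]
    refine Finset.sum_congr rfl (fun l _ => ?_)
    have hX : 𝕋 (reflW r a b (l : ℤ)) * 𝕏 a
        = (zeta r ^ (l : ℤ)) • (𝕏 b * 𝕋 (reflW r a b (l : ℤ))) := by
      have e := TT_X r n κ c₀ c (reflW r a b (l : ℤ)) (Equiv.swap a b) (reflData r a b (l : ℤ))
        (refl_mono hab.ne (l : ℤ)) (reflData_ne_zero r a b (l : ℤ)) a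
      rw [Equiv.swap_apply_left, reflData_at_i hab.ne] at e
      rw [e, ← zpow_neg, neg_neg]
    rw [smul_mul_assoc, hX, smul_smul, zmul1 (show -(l : ℤ) + l = 0 by ring), zpow_zero,
      one_smul, ← mul_assoc, hC]
  have hTT : (∑ l ∈ Finset.range r, 𝕋 (reflW r a b (l : ℤ))) = T := by
    rw [hT, ← sum_Trefl_neg r n κ c₀ c hr b a]
    exact Finset.sum_congr rfl (fun l _ => by rw [refl_symm hab.ne])
  -- main products
  have hxy : 𝕏 a * 𝕐 b = 𝕐 b * 𝕏 a
      - c₀ • (∑ l ∈ Finset.range r, (zeta r ^ (-(l : ℤ))) • 𝕋 (reflW r b a (l : ℤ))) := by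
    rw [YX_ne r n κ c₀ c b a hba]; abel
  have hxy' : 𝕏 b * 𝕐 a = 𝕐 a * 𝕏 b
      - c₀ • (∑ l ∈ Finset.range r, (zeta r ^ (-(l : ℤ))) • 𝕋 (reflW r a b (l : ℤ))) := by
    rw [YX_ne r n κ c₀ c a b hab.ne]; abel
  have e1 : A * C = 𝕐 a * (𝕐 b * (𝕏 a * 𝕏 b)) - c₀ • (A * T) := by
    calc A * C = 𝕐 a * ((𝕏 a * 𝕐 b) * 𝕏 b) := by rw [hA, hC]; simp only [mul_assoc]
      _ = 𝕐 a * ((𝕐 b * 𝕏 a) * 𝕏 b)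
          - c₀ • (𝕐 a * ((∑ l ∈ Finset.range r, (zeta r ^ (-(l : ℤ)))
              • 𝕋 (reflW r b a (l : ℤ))) * 𝕏 b)) := by
        rw [hxy, sub_mul, mul_sub, smul_mul_assoc, mul_smul_comm]
      _ = 𝕐 a * (𝕐 b * (𝕏 a * 𝕏 b)) - c₀ • (A * T) := by rw [hS]; simp only [mul_assoc]
  have e2 : C * A = 𝕐 a * (𝕐 b * (𝕏 a * 𝕏 b)) - c₀ • (C * T) := by
    calc C * A = 𝕐 b * ((𝕏 b * 𝕐 a) * 𝕏 a) := by rw [hA, hC]; simp only [mul_assoc]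
      _ = 𝕐 b * ((𝕐 a * 𝕏 b) * 𝕏 a)
          - c₀ • (𝕐 b * ((∑ l ∈ Finset.range r, (zeta r ^ (-(l : ℤ)))
              • 𝕋 (reflW r a b (l : ℤ))) * 𝕏 a)) := by
        rw [hxy', sub_mul, mul_sub, smul_mul_assoc, mul_smul_comm]
      _ = 𝕐 b * (𝕐 a * (𝕏 b * 𝕏 a)) - c₀ • (C * T) := by rw [hS', hTT]; simp only [mul_assoc]
      _ = 𝕐 a * (𝕐 b * (𝕏 a * 𝕏 b)) - c₀ • (C * T) := by
        rw [XX_comm r n κ c₀ c b a, ← mul_assoc, YY_comm r n κ c₀ c b a, mul_assoc]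
  have e4 : Φ a * C = C * Φ a := Phi_comm_YX r n κ c₀ c hab
  have e5 : Φ a * Φ b = Φ b * Φ a := Phi_comm_Phi r n κ c₀ c hr hab
  -- final assembly
  show (A + c₀ • Φ a) * (C + c₀ • Φ b) = (C + c₀ • Φ b) * (A + c₀ • Φ a)
  simp only [add_mul, mul_add, smul_mul_assoc, mul_smul_comm, smul_smul]
  rw [e1, e2, e4, e5, eAD, eDA]
  simp only [smul_add, ← hR]
  abel

lemma z_commute (hr : 1 ≤ r) (a b : Fin n) : Commute (ZZ a) (ZZ b) := by
  rcases lt_trichotomy a b with hl | he | hg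
  · exact z_comm_lt r n κ c₀ c hr hl
  · rw [he]
  · exact (z_comm_lt r n κ c₀ c hr hg).symm

end ZComm

section Eval

lemma listpow {M : Type*} [Monoid M] : ∀ (N : ℕ) (v : Fin N → M)
    (_ : ∀ a b, Commute (v a) (v b)) (m : Fin N → ℕ) (k : Fin N),
    (List.ofFn fun i => v i ^ (m i + if k = i then 1 else 0)).prod
      = (List.ofFn fun i => v i ^ m i).prod * v k := by
  intro N
  induction N with
  | zero => exact fun v hv m k => absurd k.2 (by omega)
  | succ N ih =>
    intro v hv m k
    rw [List.ofFn_succ, List.ofFn_succ, List.prod_cons, List.prod_cons]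
    have hcomm : Commute (v 0) ((List.ofFn fun i : Fin N => v i.succ ^ m i.succ).prod) := by
      apply Commute.list_prod_right
      intro x hx
      obtain ⟨i, rfl⟩ := List.mem_ofFn.1 hx
      exact (hv 0 i.succ).pow_right _
    rcases Fin.eq_zero_or_eq_succ k with hk | ⟨k', rfl⟩
    · subst hk
      have hfun : (fun i : Fin N =>
          v i.succ ^ (m i.succ + if (0 : Fin (N + 1)) = i.succ then 1 else 0))
          = fun i : Fin N => v i.succ ^ m i.succ :=
        funext fun i => by rw [if_neg (Fin.succ_ne_zero i).symm, add_zero]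
      rw [hfun, if_pos rfl, pow_succ, mul_assoc, mul_assoc, hcomm.eq]
    · have hhead : (if k'.succ = (0 : Fin (N + 1)) then 1 else 0) = 0 :=
        if_neg (Fin.succ_ne_zero k')
      rw [hhead, add_zero]
      have hfun : (fun i : Fin N =>
          v i.succ ^ (m i.succ + if k'.succ = i.succ then 1 else 0))
          = fun i : Fin N => v i.succ ^ (m i.succ + if k' = i then 1 else 0) :=
        funext fun i => by simp [Fin.succ_inj]
      rw [hfun, ih (fun i => v i.succ) (fun a b => hv a.succ b.succ) (fun i => m i.succ) k',
        ← mul_assoc]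

end Eval

section Eval2

variable (r n : ℕ) (κ c₀ : ℂ) (c : ℕ → ℂ)

local notation "ZZ" => cz r n κ c₀ c
local notation "E" => evalZ r n κ c₀ c

lemma evalZ_def (f : MvPolynomial (Fin n) ℂ) :
    E f = Finsupp.sum (AddMonoidAlgebra.coeff f) (fun m a => a • (List.ofFn fun i : Fin n => ZZ i ^ m i).prod) := rfl

lemma evalZ_zero : E 0 = 0 := by
  rw [evalZ_def, AddMonoidAlgebra.coeff_zero, Finsupp.sum_zero_index]

lemma evalZ_add (f g : MvPolynomial (Fin n) ℂ) : E (f + g) = E f + E g := by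
  rw [evalZ_def, evalZ_def, evalZ_def, AddMonoidAlgebra.coeff_add]
  exact Finsupp.sum_add_index' (fun m => zero_smul ℂ _) (fun m a b => add_smul a b _)

lemma evalZ_monomial (m : Fin n →₀ ℕ) (a : ℂ) :
    E (MvPolynomial.monomial m a) = a • (List.ofFn fun i : Fin n => ZZ i ^ m i).prod := by
  rw [evalZ_def]
  exact MvPolynomial.sum_monomial_eq (by rw [zero_smul])

lemma evalZ_smul (a : ℂ) (f : MvPolynomial (Fin n) ℂ) : E (a • f) = a • E f := by
  induction f using MvPolynomial.induction_on' with
  | monomial m b =>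
    rw [MvPolynomial.smul_monomial, evalZ_monomial, evalZ_monomial, smul_smul, smul_eq_mul]
  | add p q hp hq =>
    rw [smul_add, evalZ_add, evalZ_add, hp, hq, smul_add]

lemma evalZ_C (a : ℂ) : E (MvPolynomial.C a) = a • 1 := by
  rw [show (MvPolynomial.C a : MvPolynomial (Fin n) ℂ) = MvPolynomial.monomial 0 a from rfl,
    evalZ_monomial]
  congr 1
  refine List.prod_eq_one (fun x hx => ?_)
  obtain ⟨i, rfl⟩ := List.mem_ofFn.1 hx
  simp

lemma evalZ_mul_X (hr : 1 ≤ r) (f : MvPolynomial (Fin n) ℂ) (k : Fin n) :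
    E (f * MvPolynomial.X k) = E f * ZZ k := by
  induction f using MvPolynomial.induction_on' with
  | monomial m a =>
    rw [show (MvPolynomial.X k : MvPolynomial (Fin n) ℂ)
        = MvPolynomial.monomial (Finsupp.single k 1) 1 from rfl, MvPolynomial.monomial_mul,
      evalZ_monomial, evalZ_monomial, mul_one]
    simp only [Finsupp.add_apply, Finsupp.single_apply]
    rw [listpow n (fun i => ZZ i) (fun a b => z_commute r n κ c₀ c hr a b)
      (fun i => m i) k, smul_mul_assoc]
  | add p q hp hq =>
    rw [add_mul, evalZ_add, evalZ_add, hp, hq, add_mul]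

lemma evalZ_neg (f : MvPolynomial (Fin n) ℂ) : E (-f) = - E f := by
  have h1 : ((-1 : ℂ) • f) = -f := neg_one_smul ℂ f
  rw [← h1, evalZ_smul]
  exact neg_one_smul ℂ (evalZ r n κ c₀ c f)

lemma evalZ_sub (f g : MvPolynomial (Fin n) ℂ) : E (f - g) = E f - E g := by
  rw [sub_eq_add_neg, evalZ_add, evalZ_neg, sub_eq_add_neg]

lemma Pi_comm_evalZ (hr : 1 ≤ r) {i j : Fin n} (hij : i ≠ j) (g : MvPolynomial (Fin n) ℂ) :
    cPi r n κ c₀ c i j * E g = E g * cPi r n κ c₀ c i j := by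
  rw [evalZ_def, Finsupp.sum, Finset.mul_sum, Finset.sum_mul]
  refine Finset.sum_congr rfl (fun m _ => ?_)
  rw [mul_smul_comm, smul_mul_assoc]
  congr 1
  refine (Commute.list_prod_right _ _ (fun x hx => ?_)).eq
  obtain ⟨a, rfl⟩ := List.mem_ofFn.1 hx
  exact (show Commute (cPi r n κ c₀ c i j) (ZZ a) from Pi_comm_z r n κ c₀ c hr hij a).pow_right _

end Eval2

end Stmt9Aux


/-- For `f ∈ ℂ[Z_1, …, Z_n]`,
`t_{s_i} f(z) = (s_i·f)(z) t_{s_i} - c₀ π_i g(z)` where `(Z_i - Z_{i+1}) g = f - s_i·f`. -/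
theorem stmt9 (hr : 1 ≤ r) (hn : 2 ≤ n) (i i' : Fin n) (h : (i' : ℕ) = (i : ℕ) + 1)
    (f g : MvPolynomial (Fin n) ℂ)
    (hg : (MvPolynomial.X i - MvPolynomial.X i') * g =
      f - MvPolynomial.rename (Equiv.swap i i') f) :
    cT r n κ c₀ c (sW r i i') * evalZ r n κ c₀ c f =
      evalZ r n κ c₀ c (MvPolynomial.rename (Equiv.swap i i') f) * cT r n κ c₀ c (sW r i i') -
        c₀ • (cPi r n κ c₀ c i i' * evalZ r n κ c₀ c g) := by
  have hii' : i ≠ i' := fun e => by rw [e] at h; omega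
  have key : ∀ p : MvPolynomial (Fin n) ℂ,
      ∃ g0 : MvPolynomial (Fin n) ℂ,
        (MvPolynomial.X i - MvPolynomial.X i') * g0
            = p - MvPolynomial.rename (Equiv.swap i i') p ∧
          cT r n κ c₀ c (sW r i i') * evalZ r n κ c₀ c p
            = evalZ r n κ c₀ c (MvPolynomial.rename (Equiv.swap i i') p)
                * cT r n κ c₀ c (sW r i i')
              - c₀ • (cPi r n κ c₀ c i i' * evalZ r n κ c₀ c g0) := by
    intro p
    induction p using MvPolynomial.induction_on with
    | C a =>
      refine ⟨0, by simp, ?_⟩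
      rw [MvPolynomial.rename_C, Stmt9Aux.evalZ_zero, mul_zero, smul_zero, sub_zero,
        Stmt9Aux.evalZ_C, mul_smul_comm, smul_mul_assoc, one_mul, mul_one]
    | add p q hp hq =>
      obtain ⟨g1, hg1, he1⟩ := hp
      obtain ⟨g2, hg2, he2⟩ := hq
      refine ⟨g1 + g2, by rw [mul_add, hg1, hg2, map_add]; ring, ?_⟩
      rw [map_add, Stmt9Aux.evalZ_add, Stmt9Aux.evalZ_add, Stmt9Aux.evalZ_add, mul_add,
        he1, he2, add_mul, mul_add, smul_add]
      abel
    | mul_X p k hp =>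
      obtain ⟨g1, hg1, he1⟩ := hp
      have hrename : MvPolynomial.rename (Equiv.swap i i') (p * MvPolynomial.X k)
          = MvPolynomial.rename (Equiv.swap i i') p
              * MvPolynomial.X (Equiv.swap i i' k) := by
        rw [map_mul, MvPolynomial.rename_X]
      by_cases hk1 : k = i
      · subst hk1
        refine ⟨g1 * MvPolynomial.X k + MvPolynomial.rename (Equiv.swap k i') p, ?_, ?_⟩
        · rw [hrename, Equiv.swap_apply_left]
          linear_combination MvPolynomial.X k * hg1
        · rw [hrename, Equiv.swap_apply_left]
          rw [Stmt9Aux.evalZ_mul_X r n κ c₀ c hr p k, ← mul_assoc, he1, sub_mul,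
            smul_mul_assoc, mul_assoc, Stmt9Aux.ts_z_i r n κ c₀ c hr h, mul_sub,
            mul_smul_comm, ← Stmt9Aux.Pi_comm_evalZ r n κ c₀ c hr hii',
            ← mul_assoc,
            ← Stmt9Aux.evalZ_mul_X r n κ c₀ c hr (MvPolynomial.rename (Equiv.swap k i') p) i',
            Stmt9Aux.evalZ_add, Stmt9Aux.evalZ_mul_X r n κ c₀ c hr g1 k, mul_add, smul_add,
            mul_assoc (cPi r n κ c₀ c k i')]
          abel
      · by_cases hk2 : k = i'
        · subst hk2
          refine ⟨g1 * MvPolynomial.X k - MvPolynomial.rename (Equiv.swap i k) p, ?_, ?_⟩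
          · rw [hrename, Equiv.swap_apply_right]
            linear_combination MvPolynomial.X k * hg1
          · rw [hrename, Equiv.swap_apply_right]
            rw [Stmt9Aux.evalZ_mul_X r n κ c₀ c hr p k, ← mul_assoc, he1, sub_mul,
              smul_mul_assoc, mul_assoc, Stmt9Aux.ts_z_i' r n κ c₀ c hr h, mul_add,
              mul_smul_comm, ← Stmt9Aux.Pi_comm_evalZ r n κ c₀ c hr hii',
              ← mul_assoc,
              ← Stmt9Aux.evalZ_mul_X r n κ c₀ c hr (MvPolynomial.rename (Equiv.swap i k) p) i,
              Stmt9Aux.evalZ_sub, Stmt9Aux.evalZ_mul_X r n κ c₀ c hr g1 k, mul_sub, smul_sub,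
              mul_assoc (cPi r n κ c₀ c i k)]
            abel
        · refine ⟨g1 * MvPolynomial.X k, ?_, ?_⟩
          · rw [hrename, Equiv.swap_apply_of_ne_of_ne hk1 hk2]
            linear_combination MvPolynomial.X k * hg1
          · rw [hrename, Equiv.swap_apply_of_ne_of_ne hk1 hk2]
            rw [Stmt9Aux.evalZ_mul_X r n κ c₀ c hr p k, ← mul_assoc, he1, sub_mul,
              smul_mul_assoc, mul_assoc, Stmt9Aux.ts_z_other r n κ c₀ c hr h hk1 hk2,
              ← mul_assoc,
              ← Stmt9Aux.evalZ_mul_X r n κ c₀ c hr (MvPolynomial.rename (Equiv.swap i i') p) k,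
              Stmt9Aux.evalZ_mul_X r n κ c₀ c hr g1 k,
              mul_assoc (cPi r n κ c₀ c i i')]
  obtain ⟨g0, hg0, he⟩ := key f
  have hne : (MvPolynomial.X i - MvPolynomial.X i' : MvPolynomial (Fin n) ℂ) ≠ 0 :=
    sub_ne_zero.mpr (fun e => hii' (MvPolynomial.X_injective e))
  have hgg : g = g0 := mul_left_cancel₀ hne (hg.trans hg0.symm)
  rw [hgg]
  exact he
end
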